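/- arXiv:1511.05442 — 7 statements merged into one kernel-verified Lean document; each statement's English description precedes it below -/
import Mathlib

section
/- A finite semigroup S is not Mal'cev nilpotent if and only if there exist a positive integer m, distinct elements x, y ∈ S, and elements w₁, w₂, …, w_m ∈ S¹ such that x = λ_m(x, y, w₁, …, w_m) and y = ρ_m(x, y, w₁, …, w_m). -/
/-- The pair (λ_n, ρ_n) computed in S¹ = `WithOne S`, where `z i` is the i-th
inserted element (only `z 1, …, z n` matter for the n-th term). -/
def lrho {S : Type*} [Semigroup S] (x y : WithOne S) (z : ℕ → WithOne S) :
    ℕ → WithOne S × WithOne S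
  | 0 => (x, y)
  | n + 1 =>
    ((lrho x y z n).1 * z (n + 1) * (lrho x y z n).2,
     (lrho x y z n).2 * z (n + 1) * (lrho x y z n).1)

/-- A semigroup is Mal'cev nilpotent if for some `n ≥ 1`,
`λ_n(a,b,c₁,…,c_n) = ρ_n(a,b,c₁,…,c_n)` for all `a b ∈ S`, `cᵢ ∈ S¹`. -/
def IsMN (S : Type*) [Semigroup S] : Prop :=
  ∃ n : ℕ, 0 < n ∧ ∀ (a b : S) (c : ℕ → WithOne S),
    (lrho (a : WithOne S) (b : WithOne S) c n).1 =
      (lrho (a : WithOne S) (b : WithOne S) c n).2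

/-!
If `λ_n ≠ ρ_n` for some `n` at least the number of pairs in `S¹ × S¹`, two of the pairs
`(λ_k, ρ_k)` with `k ≤ n` coincide, say at `i < j`. The pair `(x, y) := (λ_i, ρ_i)` has
`x ≠ y`, since equality would persist up to `n`, and running the recursion from it with the
inserted elements `z_{i+1}, …, z_j` returns to `(x, y)` after `m = j - i` steps.
Conversely, repeating such `w₁, …, w_m` periodically keeps returning to `(x, y)` at every
multiple of `m`, so `λ_n ≠ ρ_n` for every `n`.
-/

theorem exists_lt_le_card_map_eq {α : Type*} [Finite α] (f : ℕ → α) :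
    ∃ i j, i < j ∧ j ≤ Nat.card α ∧ f i = f j := by
  have := Fintype.ofFinite α
  obtain ⟨i, j, hij, hfij⟩ :=
    Fintype.exists_ne_map_eq_of_card_lt (fun k : Fin (Nat.card α + 1) => f k) (by simp)
  rcases Fin.lt_or_lt_of_ne hij with h | h
  · exact ⟨i, j, h, Nat.lt_succ_iff.mp j.isLt, hfij⟩
  · exact ⟨j, i, h, Nat.lt_succ_iff.mp i.isLt, hfij.symm⟩

theorem exists_periodic_eqOn_Icc {α : Type*} (w : ℕ → α) {m : ℕ} (hm : 0 < m) :
    ∃ z : ℕ → α, Function.Periodic z m ∧ Set.EqOn z w (Set.Icc 1 m) := by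
  -- the representative of `i` mod `m` in `[1, m]`; the `+ m` keeps `- 1` from truncating at `i = 0`
  refine ⟨fun i => w ((i + m - 1) % m + 1), fun i => ?_, fun i hi => ?_⟩
  · dsimp only
    rw [show i + m + m - 1 = i + m - 1 + m by omega, Nat.add_mod_right]
  · obtain ⟨hi₁, hi₂⟩ := hi
    dsimp only
    rw [show i + m - 1 = i - 1 + m by omega, Nat.add_mod_right, Nat.mod_eq_of_lt (by omega)]
    congr 1
    omega

instance WithOne.finite {α : Type*} [Finite α] : Finite (WithOne α) :=
  inferInstanceAs (Finite (Option α))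

section

variable {S : Type*} [Semigroup S]

namespace lrho

theorem add (x y : WithOne S) (z : ℕ → WithOne S) (n k : ℕ) :
    lrho x y z (n + k) = lrho (lrho x y z n).1 (lrho x y z n).2 (fun i => z (n + i)) k := by
  induction k with
  | zero => rfl
  | succ k ih => rw [← add_assoc, lrho, ih]; rfl

theorem congr {x y : WithOne S} {z z' : ℕ → WithOne S} {n : ℕ}
    (h : Set.EqOn z z' (Set.Icc 1 n)) : lrho x y z n = lrho x y z' n := by
  induction n with
  | zero => rfl
  | succ n ih =>
    rw [lrho, lrho, ih (h.mono (Set.Icc_subset_Icc_right n.le_succ)),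
      h ⟨n.succ_pos, le_rfl⟩]

theorem fst_eq_snd_self (x : WithOne S) (z : ℕ → WithOne S) (k : ℕ) :
    (lrho x x z k).1 = (lrho x x z k).2 := by
  induction k with
  | zero => rfl
  | succ k ih => simp only [lrho, ih]

theorem fst_eq_snd_of_le {x y : WithOne S} {z : ℕ → WithOne S} {n k : ℕ} (hnk : n ≤ k)
    (h : (lrho x y z n).1 = (lrho x y z n).2) : (lrho x y z k).1 = (lrho x y z k).2 := by
  obtain ⟨d, rfl⟩ := Nat.exists_eq_add_of_le hnk
  rw [add, h]
  exact fst_eq_snd_self _ _ d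

theorem exists_eq_coe (a b : S) (z : ℕ → WithOne S) (n : ℕ) :
    ∃ p q : S, lrho (a : WithOne S) b z n = (↑p, ↑q) := by
  induction n with
  | zero => exact ⟨a, b, rfl⟩
  | succ n ih =>
    obtain ⟨p, q, h⟩ := ih
    rw [lrho, h]
    induction z (n + 1) using WithOne.recOneCoe with
    | one => exact ⟨p * q, q * p, by simp⟩
    | coe s => exact ⟨p * s * q, q * s * p, by simp [← WithOne.coe_mul]⟩

theorem mul_eq_of_periodic {x y : WithOne S} {z : ℕ → WithOne S} {m : ℕ}
    (hz : Function.Periodic z m) (h : lrho x y z m = (↑x, ↑y)) (k : ℕ) :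
    lrho x y z (k * m) = (↑x, ↑y) := by
  induction k with
  | zero => rw [zero_mul]; rfl
  | succ k ih =>
    have hshift : (fun i => z (k * m + i)) = z := funext fun i => by
      rw [add_comm]; exact hz.nat_mul k i
    rw [add_mul, one_mul, add, ih, hshift, h]

end lrho

theorem exists_lrho_cycle_of_fst_ne_snd {a b : S} {c : ℕ → WithOne S} {n : ℕ}
    [Finite S] (hn : Nat.card (WithOne S × WithOne S) ≤ n)
    (hne : (lrho (a : WithOne S) b c n).1 ≠ (lrho (a : WithOne S) b c n).2) :
    ∃ (m : ℕ) (x y : S) (w : ℕ → WithOne S), 0 < m ∧ x ≠ y ∧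
      lrho (x : WithOne S) y w m = (↑x, ↑y) := by
  obtain ⟨i, j, hij, hj, hrep⟩ := exists_lt_le_card_map_eq (lrho (a : WithOne S) b c)
  obtain ⟨p, q, hpq⟩ := lrho.exists_eq_coe a b c i
  refine ⟨j - i, p, q, fun k => c (i + k), by omega, ?_, ?_⟩
  · rintro rfl
    exact hne (lrho.fst_eq_snd_of_le (n := i) (by omega) (by rw [hpq]))
  · have hcycle := lrho.add (a : WithOne S) b c i (j - i)
    rwa [Nat.add_sub_cancel' hij.le, ← hrep, hpq, eq_comm] at hcycle

theorem not_isMN_of_lrho_cycle {m : ℕ} {x y : S} {w : ℕ → WithOne S} (hm : 0 < m)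
    (hxy : x ≠ y) (hcycle : lrho (x : WithOne S) y w m = (↑x, ↑y)) : ¬ IsMN S := by
  rintro ⟨n, hn, hMN⟩
  obtain ⟨z, hz, hzw⟩ := exists_periodic_eqOn_Icc w hm
  have hreturn : lrho (x : WithOne S) y z (n * m) = (↑x, ↑y) :=
    lrho.mul_eq_of_periodic hz ((lrho.congr hzw).trans hcycle) n
  have hdiag := lrho.fst_eq_snd_of_le (Nat.le_mul_of_pos_right n hm) (hMN x y z)
  rw [hreturn] at hdiag
  exact hxy (WithOne.coe_inj.mp hdiag)

end

/-- A finite semigroup S is not Mal'cev nilpotent iff there exist `m ≥ 1`,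
distinct `x y ∈ S` and `w₁, …, w_m ∈ S¹` with `x = λ_m(x,y,w₁,…,w_m)` and
`y = ρ_m(x,y,w₁,…,w_m)`. -/
theorem not_isMN_iff (S : Type*) [Semigroup S] [Finite S] :
    ¬ IsMN S ↔
      ∃ (m : ℕ) (x y : S) (w : ℕ → WithOne S), 0 < m ∧ x ≠ y ∧
        (x : WithOne S) = (lrho (x : WithOne S) (y : WithOne S) w m).1 ∧
        (y : WithOne S) = (lrho (x : WithOne S) (y : WithOne S) w m).2 := by
  constructor
  · intro hMN
    simp only [IsMN, not_exists, not_and, not_forall] at hMN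
    obtain ⟨a, b, c, hne⟩ := hMN (Nat.card (WithOne S × WithOne S)) Nat.card_pos
    obtain ⟨m, x, y, w, hm, hxy, hcycle⟩ := exists_lrho_cycle_of_fst_ne_snd le_rfl hne
    exact ⟨m, x, y, w, hm, hxy, by rw [hcycle], by rw [hcycle]⟩
  · rintro ⟨m, x, y, w, hm, hxy, hx, hy⟩
    exact not_isMN_of_lrho_cycle hm hxy (Prod.ext hx.symm hy.symm)
end

section
/- For every finite semigroup S and all elements x, y, z ∈ S, the sequence n ↦ (λ_{n!}(x, y, z, z², …, z^{n!}), ρ_{n!}(x, y, z, z², …, z^{n!})), in which the i-th inserted element is z^i, is eventually constant. -/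
open Function Nat

instance WithOne.instFinite {S : Type*} [Finite S] : Finite (WithOne S) :=
  inferInstanceAs (Finite (Option S))

namespace Function

variable {α : Type*} [Finite α] (f : α → α) (a : α)

theorem exists_iterate_mem_periodicPts : ∃ i, f^[i] a ∈ periodicPts f := by
  obtain ⟨i, j, hne, hij⟩ := Finite.exists_ne_map_eq_of_infinite (f^[·] a)
  wlog hlt : i < j generalizing i j
  · exact this j i hne.symm hij.symm (by omega)
  refine ⟨i, mk_mem_periodicPts (Nat.sub_pos_of_lt hlt) ?_⟩
  rw [IsPeriodicPt, IsFixedPt, ← iterate_add_apply, Nat.sub_add_cancel hlt.le, hij]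

theorem exists_forall_ge_iterate_mem_periodicPts :
    ∃ i, ∀ m, i ≤ m → f^[m] a ∈ periodicPts f := by
  obtain ⟨i, hi⟩ := exists_iterate_mem_periodicPts f a
  obtain ⟨p, hp, hper⟩ := mem_periodicPts.1 hi
  refine ⟨i, fun m hm => mk_mem_periodicPts hp ?_⟩
  rw [← Nat.sub_add_cancel hm, iterate_add_apply]
  exact hper.apply_iterate _

theorem exists_forall_ge_iterate_factorial_eq :
    ∃ N, ∀ n, N ≤ n → f^[n !] a = f^[N !] a := by
  have := Fintype.ofFinite α
  obtain ⟨i, hi⟩ := exists_forall_ge_iterate_mem_periodicPts f a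
  refine ⟨max i (Fintype.card α), fun n hn => ?_⟩
  set N := max i (Fintype.card α)
  have hper : IsPeriodicPt f N ! (f^[N !] a) :=
    (isPeriodicPt_factorial_card_of_mem_periodicPts
      (hi _ ((le_max_left _ _).trans (self_le_factorial N)))).trans_dvd
      (factorial_dvd_factorial (le_max_right _ _))
  rw [← Nat.sub_add_cancel (factorial_le hn), iterate_add_apply]
  exact (hper.trans_dvd (Nat.dvd_sub (factorial_dvd_factorial hn) dvd_rfl)).eq

end Function

def lrhoStep {M : Type*} [Monoid M] (c : M) (s : (M × M) × M) : (M × M) × M :=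
  ((s.1.1 * s.2 * s.1.2, s.1.2 * s.2 * s.1.1), s.2 * c)

theorem iterate_lrhoStep {S : Type*} [Semigroup S] (x y c : WithOne S) (n : ℕ) :
    (lrhoStep c)^[n] ((x, y), c) = (lrho x y (c ^ ·) n, c ^ (n + 1)) := by
  induction n with
  | zero => simp [lrho]
  | succ n ih => simp only [iterate_succ_apply', ih, lrhoStep, lrho, pow_succ]

/-- For a finite semigroup, the sequence
`n ↦ (λ_{n!}(x,y,z,z²,…,z^{n!}), ρ_{n!}(x,y,z,z²,…,z^{n!}))` is eventually
constant. -/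
theorem lrho_pow_factorial_eventually_constant (S : Type*) [Semigroup S]
    [Finite S] (x y z : S) :
    ∃ N : ℕ, ∀ n : ℕ, N ≤ n →
      lrho (x : WithOne S) (y : WithOne S)
          (fun i => (z : WithOne S) ^ i) (Nat.factorial n) =
        lrho (x : WithOne S) (y : WithOne S)
          (fun i => (z : WithOne S) ^ i) (Nat.factorial N) := by
  obtain ⟨N, hN⟩ := exists_forall_ge_iterate_factorial_eq (lrhoStep (z : WithOne S)) ((x, y), z)
  refine ⟨N, fun n hn => ?_⟩
  simpa only [iterate_lrhoStep] using congrArg Prod.fst (hN n hn)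
end

section
/- Every finite Neumann–Taylor semigroup is in NDF₁₂; that is, if S is a finite semigroup satisfying the Neumann–Taylor condition, then S belongs to BG_nil and S is divisible neither by F₇ nor by F₁₂. -/
/-- A semigroup is Neumann–Taylor if for some `n ≥ 2`,
`λ_n(a,b,1,c₂,…,c_n) = ρ_n(a,b,1,c₂,…,c_n)` for all `a b ∈ S`, `cᵢ ∈ S¹`. -/
def IsNT (S : Type*) [Semigroup S] : Prop :=
  ∃ n : ℕ, 2 ≤ n ∧ ∀ (a b : S) (c : ℕ → WithOne S),
    (lrho (a : WithOne S) (b : WithOne S) (fun i => if i = 1 then 1 else c i) n).1 =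
      (lrho (a : WithOne S) (b : WithOne S) (fun i => if i = 1 then 1 else c i) n).2

/-- `Divides S T` : S is a homomorphic image of a subsemigroup of T, i.e. S ≺ T. -/
def Divides (S T : Type*) [Mul S] [Mul T] : Prop :=
  ∃ (U : Subsemigroup T) (f : U →ₙ* S), Function.Surjective f

/-- The 7-element semigroup F₇ = {θ, 1, u, e₁₁, e₁₂, e₂₁, e₂₂}. -/
inductive F7 : Type
  | th | one | u | e11 | e12 | e21 | e22
  deriving DecidableEq

instance : Fintype F7 :=
  ⟨{F7.th, F7.one, F7.u, F7.e11, F7.e12, F7.e21, F7.e22}, fun x => by cases x <;> decide⟩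

namespace F7

/-- Multiplication table of F₇: θ is a zero, 1 is an identity, u² = 1,
`e_{ij} e_{kl} = e_{il}` if `j = k` and θ otherwise, `e_{ij} u = e_{ij'}`,
`u e_{ij} = e_{i'j}` where `1' = 2`, `2' = 1`. -/
def mul : F7 → F7 → F7
  | th, _ => th
  | _, th => th
  | one, x => x
  | x, one => x
  | u, u => one
  | u, e11 => e21
  | u, e12 => e22
  | u, e21 => e11
  | u, e22 => e12
  | e11, u => e12
  | e12, u => e11
  | e21, u => e22
  | e22, u => e21
  | e11, e11 => e11
  | e11, e12 => e12
  | e11, _ => th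
  | e12, e21 => e11
  | e12, e22 => e12
  | e12, _ => th
  | e21, e11 => e21
  | e21, e12 => e22
  | e21, _ => th
  | e22, e21 => e21
  | e22, e22 => e22
  | e22, _ => th

instance : Mul F7 := ⟨mul⟩

instance : Semigroup F7 where
  mul_assoc := by decide

end F7

/-- Transformations of the 4-element set {1, 2, 3, θ} (θ is index 3), acting on
the right: the product `s * t` means "apply s first, then t". -/
structure Tr4 : Type where
  toFun : Fin 4 → Fin 4

instance : DecidableEq Tr4 := fun a b =>
  decidable_of_iff (a.toFun = b.toFun) (by cases a; cases b; simp)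

instance : Mul Tr4 := ⟨fun a b => ⟨b.toFun ∘ a.toFun⟩⟩

instance : Semigroup Tr4 := ⟨fun _ _ _ => rfl⟩

/-- The constant map with value θ. -/
def thT : Tr4 := ⟨fun _ => 3⟩
/-- `eT i j` sends i to j and every other point to θ. -/
def eT (i j : Fin 4) : Tr4 := ⟨fun x => if x = i then j else 3⟩
/-- w₁ fixes 1 and sends 3 ↦ 2, 2 ↦ θ, θ ↦ θ. -/
def w1T : Tr4 := ⟨![0, 3, 1, 3]⟩
/-- w₂ sends 3 ↦ 1, 1 ↦ 2, 2 ↦ θ, θ ↦ θ. -/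
def w2T : Tr4 := ⟨![1, 3, 0, 3]⟩

/-- The 12 elements of F₁₂: θ̄, the nine e_{ij} (i, j ∈ {1,2,3}), w₁ and w₂
(the subsemigroup generated by w₁, w₂ consists of w₁, w₂, e₁₁, e₁₂, e₃₁, e₃₂). -/
def F12list : List Tr4 :=
  [thT, eT 0 0, eT 0 1, eT 0 2, eT 1 0, eT 1 1, eT 1 2, eT 2 0, eT 2 1, eT 2 2, w1T, w2T]

/-- F₁₂ as a subsemigroup of the transformation semigroup on {1,2,3,θ}. -/
def F12 : Subsemigroup Tr4 where
  carrier := {a | a ∈ F12list}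
  mul_mem' := by
    intro a b ha hb
    simp only [F12list, Set.mem_setOf_eq, List.mem_cons, List.not_mem_nil, or_false] at ha hb ⊢
    rcases ha with rfl | rfl | rfl | rfl | rfl | rfl | rfl | rfl | rfl | rfl | rfl | rfl <;>
      rcases hb with rfl | rfl | rfl | rfl | rfl | rfl | rfl | rfl | rfl | rfl | rfl | rfl <;>
      decide

/-- A block group: each element has at most one inverse. -/
def IsBlockGroup (S : Type*) [Semigroup S] : Prop :=
  ∀ s x y : S,
    (s * x * s = s ∧ x * s * x = x) → (s * y * s = s ∧ y * s * y = y) → x = y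

/-- `S ∈ BG_nil`: S is a block group and every subsemigroup of S that is a group
(equivalently, every finite group embedding into S) is nilpotent. -/
def IsBGnil (S : Type*) [Semigroup S] : Prop :=
  IsBlockGroup S ∧
    ∀ (G : Type) [Group G] [Finite G] (f : G →ₙ* S),
      Function.Injective f → Group.IsNilpotent G

/-- `S ∈ NDF₁₂`: S is in BG_nil and is divisible neither by F₇ nor by F₁₂. -/
def IsNDF12 (S : Type*) [Semigroup S] : Prop :=
  IsBGnil S ∧ ¬ Divides F7 S ∧ ¬ Divides (↥F12) S

/-!
Writing `(λₖ₊₁, ρₖ₊₁) = (λₖ cₖ₊₁ ρₖ, ρₖ cₖ₊₁ λₖ)`, the Neumann–Taylor law passes to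
subsemigroups and homomorphic images, so it suffices to test it on S itself, on its subgroups,
and on F₇ and F₁₂.

* Taking all `cᵢ = 1`, a pair `x, y` with `{xy, yx} = {x, y}` is only permuted by each step,
  so the law forces `x = y`; applied to `xs, ys` and to `sx, sy` for two inverses `x, y` of `s`
  this gives `x = y`.
* In a group, choosing `cₖ₊₁ = ρₖ⁻¹ sₖ₊₁` turns `wₖ = λₖ ρₖ⁻¹` into `wₖ₊₁ = [wₖ, sₖ₊₁]`, with
  `w₁ = [a, b]`. The law therefore kills all left-normed commutators of weight `n + 1`,
  and the group is nilpotent.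
* In F₇ and F₁₂ there are `a, b` and insertions for which `(λₖ, ρₖ)` alternates between two
  off-diagonal pairs forever.
-/

open Function Subgroup
open scoped commutatorElement

def ntStep {M : Type*} [Mul M] (c : M) (p : M × M) : M × M :=
  (p.1 * c * p.2, p.2 * c * p.1)

def lambdaRho {M : Type*} [Mul M] (x y : M) (z : ℕ → M) : ℕ → M × M
  | 0 => (x, y)
  | n + 1 => ntStep (z (n + 1)) (lambdaRho x y z n)

section LambdaRho

variable {M N : Type*} [Mul M] [Mul N]

theorem lrho_eq_lambdaRho {S : Type*} [Semigroup S] (x y : WithOne S) (z : ℕ → WithOne S) :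
    ∀ n, lrho x y z n = lambdaRho x y z n
  | 0 => rfl
  | n + 1 => by rw [lrho, lambdaRho, ← lrho_eq_lambdaRho x y z n]; rfl

theorem map_ntStep {F : Type*} [FunLike F M N] [MulHomClass F M N] (φ : F) (c : M) (p : M × M) :
    Prod.map φ φ (ntStep c p) = ntStep (φ c) (Prod.map φ φ p) := by
  simp only [ntStep, Prod.map, map_mul]

theorem lambdaRho_map {F : Type*} [FunLike F M N] [MulHomClass F M N] (φ : F) (x y : M)
    (z : ℕ → M) : ∀ n, lambdaRho (φ x) (φ y) (φ ∘ z) n = Prod.map φ φ (lambdaRho x y z n)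
  | 0 => rfl
  | n + 1 => by rw [lambdaRho, lambdaRho, lambdaRho_map φ x y z n, map_ntStep]; rfl

theorem lambdaRho_update_of_lt (x y : M) (z : ℕ → M) {m n : ℕ} (h : n < m) (c : M) :
    lambdaRho x y (update z m c) n = lambdaRho x y z n := by
  induction n with
  | zero => rfl
  | succ n ih => rw [lambdaRho, lambdaRho, ih (by omega), update_of_ne (by omega)]

end LambdaRho

theorem isNT_iff {S : Type*} [Semigroup S] :
    IsNT S ↔ ∃ n, 2 ≤ n ∧ ∀ (a b : S) (z : ℕ → WithOne S), z 1 = 1 →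
      (lambdaRho (a : WithOne S) b z n).1 = (lambdaRho (a : WithOne S) b z n).2 := by
  simp only [IsNT, lrho_eq_lambdaRho]
  refine exists_congr fun n => and_congr_right fun _ => forall₂_congr fun a b =>
    ⟨fun h z hz => ?_, fun h c => h _ (if_pos rfl)⟩
  have hz' : (fun i => if i = 1 then 1 else z i) = z := by
    funext i
    split_ifs with hi
    · rw [hi, hz]
    · rfl
  simpa only [hz'] using h z

namespace WithOne

variable {α β : Type*} [Mul α] [Mul β]

theorem mapMulHom_surjective {f : α →ₙ* β} (hf : Surjective f) : Surjective (mapMulHom f) := by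
  intro y
  induction y with
  | one => exact ⟨1, map_one _⟩
  | coe b =>
    obtain ⟨a, rfl⟩ := hf b
    exact ⟨a, mapMulHom_coe f a⟩

theorem mapMulHom_eq_one_iff {f : α →ₙ* β} {x : WithOne α} : mapMulHom f x = 1 ↔ x = 1 := by
  induction x with
  | one => simp
  | coe a => simp only [mapMulHom_coe, coe_ne_one]

end WithOne

section Divisibility

variable {S T : Type*} [Semigroup S] [Semigroup T]

theorem IsNT.of_injective {f : S →ₙ* T} (hf : Injective f) (h : IsNT T) : IsNT S := by
  obtain ⟨n, hn, h⟩ := isNT_iff.mp h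
  refine isNT_iff.mpr ⟨n, hn, fun a b z hz => WithOne.mapMulHom_injective hf ?_⟩
  have := h (f a) (f b) (WithOne.mapMulHom f ∘ z) (by simp [hz])
  rwa [← WithOne.mapMulHom_coe f a, ← WithOne.mapMulHom_coe f b, lambdaRho_map] at this

theorem IsNT.of_surjective {f : S →ₙ* T} (hf : Surjective f) (h : IsNT S) : IsNT T := by
  obtain ⟨n, hn, h⟩ := isNT_iff.mp h
  refine isNT_iff.mpr ⟨n, hn, fun a b z hz => ?_⟩
  obtain ⟨a, rfl⟩ := hf a
  obtain ⟨b, rfl⟩ := hf b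
  choose z' hz' using fun i => WithOne.mapMulHom_surjective hf (z i)
  obtain rfl : WithOne.mapMulHom f ∘ z' = z := funext hz'
  rw [← WithOne.mapMulHom_coe f a, ← WithOne.mapMulHom_coe f b, lambdaRho_map]
  exact congrArg (WithOne.mapMulHom f) (h a b z' (WithOne.mapMulHom_eq_one_iff.mp hz))

theorem IsNT.of_divides (h : IsNT T) (hST : Divides S T) : IsNT S :=
  let ⟨U, _, hf⟩ := hST
  (h.of_injective (f := MulMemClass.subtype U) Subtype.val_injective).of_surjective hf

end Divisibility

section BlockGroup

variable {S : Type*} [Semigroup S]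

theorem IsNT.eq_of_mul_mem_pair (h : IsNT S) {x y : S}
    (hxy : (x * y, y * x) ∈ ({(x, y), (y, x)} : Set (S × S))) : x = y := by
  obtain ⟨n, -, h⟩ := isNT_iff.mp h
  have hmem : ∀ k, lambdaRho (x : WithOne S) y 1 k ∈ ({(↑x, ↑y), (↑y, ↑x)} : Set _) := by
    intro k
    induction k with
    | zero => exact Or.inl rfl
    | succ k ih =>
      simp only [Set.mem_insert_iff, Set.mem_singleton_iff, Prod.ext_iff] at hxy ih ⊢
      rcases ih with ⟨h1, h2⟩ | ⟨h1, h2⟩ <;>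
        simp only [lambdaRho, ntStep, h1, h2, Pi.one_apply, mul_one, ← WithOne.coe_mul,
          WithOne.coe_inj] <;> tauto
  rcases hmem n with hn | hn <;> have := h x y 1 rfl <;> rw [hn] at this
  · exact WithOne.coe_inj.mp this
  · exact (WithOne.coe_inj.mp this).symm

theorem IsNT.isBlockGroup (h : IsNT S) : IsBlockGroup S := by
  rintro s x y ⟨hsxs, hxsx⟩ ⟨hsys, hysy⟩
  have hxs : x * s = y * s := h.eq_of_mul_mem_pair <| Or.inl <| Prod.ext
    (by rw [mul_assoc x s, ← mul_assoc s y s, hsys])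
    (by rw [mul_assoc y s, ← mul_assoc s x s, hsxs])
  have hsx : s * x = s * y := h.eq_of_mul_mem_pair <| Or.inr <| Prod.ext
    (by simp only [← mul_assoc, hsxs]) (by simp only [← mul_assoc, hsys])
  calc x = x * s * x := hxsx.symm
    _ = y * s * y := by rw [hxs, mul_assoc, hsx, ← mul_assoc]
    _ = y := hysy

end BlockGroup

section Nilpotent

variable {G : Type*} [Group G]

theorem isNilpotent_of_foldl_commutator_eq_one (m : ℕ)
    (h : ∀ (x : G) (l : List G), l.length = m → l.foldl (⁅·, ·⁆) x = 1) :
    Group.IsNilpotent G := by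
  induction m generalizing G with
  | zero =>
    have : Subsingleton G := ⟨fun x y => (h x [] rfl).trans (h y [] rfl).symm⟩
    infer_instance
  | succ m ih =>
    refine Group.of_quotient_center_nilpotent (ih fun x l hl => ?_)
    obtain ⟨x, rfl⟩ := QuotientGroup.mk'_surjective (center G) x
    obtain ⟨l, rfl⟩ := List.map_surjective_iff.mpr (QuotientGroup.mk'_surjective (center G)) l
    rw [List.foldl_map, List.foldl_hom (QuotientGroup.mk' (center G))
      (fun _ _ => (map_commutatorElement _ _ _).symm), QuotientGroup.mk'_apply,
      QuotientGroup.eq_one_iff, mem_center_iff]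
    intro g
    have := h x (l ++ [g]) (by simpa using hl)
    rw [List.foldl_append, List.foldl_cons, List.foldl_nil] at this
    exact (commutatorElement_eq_one_iff_mul_comm.mp this).symm

theorem exists_lambdaRho_fst_eq_foldl_commutator_mul (a b : G) (l : List G) :
    ∃ z : ℕ → G, z 1 = 1 ∧ (lambdaRho a b z (l.length + 1)).1 =
      l.foldl (⁅·, ·⁆) ⁅a, b⁆ * (lambdaRho a b z (l.length + 1)).2 := by
  induction l using List.reverseRecOn with
  | nil =>
    refine ⟨1, rfl, ?_⟩
    simp only [List.length_nil, List.foldl_nil, lambdaRho, ntStep, Pi.one_apply,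
      commutatorElement_def]
    group
  | append_singleton l s ih =>
    obtain ⟨z, hz1, hz⟩ := ih
    refine ⟨update z (l.length + 1 + 1) ((lambdaRho a b z (l.length + 1)).2⁻¹ * s),
      by rw [update_of_ne (by omega), hz1], ?_⟩
    rw [List.length_append, List.length_singleton, lambdaRho,
      lambdaRho_update_of_lt a b z (Nat.lt_succ_self _), update_self, List.foldl_append,
      List.foldl_cons, List.foldl_nil, ntStep, hz, commutatorElement_def]
    group

theorem IsNT.exists_lambdaRho_eq (h : IsNT G) :
    ∃ n, 2 ≤ n ∧ ∀ (a b : G) (z : ℕ → G), z 1 = 1 →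
      (lambdaRho a b z n).1 = (lambdaRho a b z n).2 := by
  obtain ⟨n, hn, h⟩ := isNT_iff.mp h
  refine ⟨n, hn, fun a b z hz => ?_⟩
  let φ : WithOne G →* G := WithOne.lift (MulHom.id G)
  let z' : ℕ → WithOne G := fun i => if i = 1 then 1 else z i
  have hz' : φ ∘ z' = z := by
    funext i
    by_cases hi : i = 1 <;> simp [φ, z', hi, hz]
  have hmap := lambdaRho_map φ (a : WithOne G) b z' n
  simp only [hz', φ, WithOne.lift_coe, MulHom.id_apply] at hmap
  rw [hmap]
  exact congrArg φ (h a b z' (if_pos rfl))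

theorem IsNT.isNilpotent (h : IsNT G) : Group.IsNilpotent G := by
  obtain ⟨n, hn, h⟩ := h.exists_lambdaRho_eq
  refine isNilpotent_of_foldl_commutator_eq_one n fun x l hl => ?_
  cases l with
  | nil => rw [List.length_nil] at hl; omega
  | cons b l =>
    obtain ⟨z, hz1, hz⟩ := exists_lambdaRho_fst_eq_foldl_commutator_mul x b l
    rw [List.length_cons] at hl
    rw [hl, h x b z hz1] at hz
    exact mul_eq_right.mp hz.symm

end Nilpotent

theorem not_isNT_of_ntStep_cycle {S : Type*} [Semigroup S] {a b c d : S} {Q : S × S}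
    (hQ : ntStep c (a * b, b * a) = Q) (hcycle : ntStep d Q = (a * b, b * a))
    (hab : a * b ≠ b * a) (hQ₁₂ : Q.1 ≠ Q.2) : ¬ IsNT S := by
  intro h
  obtain ⟨n, hn, h⟩ := isNT_iff.mp h
  let ι : S × S → WithOne S × WithOne S := Prod.map (↑) (↑)
  let z : ℕ → WithOne S := fun i => if i = 1 then 1 else if i % 2 = 0 then c else d
  have hstep (k : ℕ) (p : S × S) (e : S) (hz : z (k + 1) = e)
      (hk : lambdaRho (a : WithOne S) b z k = ι p) :
      lambdaRho (a : WithOne S) b z (k + 1) = ι (ntStep e p) := by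
    rw [lambdaRho, hk, hz]
    exact (map_ntStep WithOne.coeMulHom e p).symm
  have hz_even (k : ℕ) : z (2 * k + 2) = c := if_neg (by omega) |>.trans (if_pos (by omega))
  have hz_odd (k : ℕ) : z (2 * k + 3) = d := if_neg (by omega) |>.trans (if_neg (by omega))
  have hperiodic (k : ℕ) : lambdaRho (a : WithOne S) b z (2 * k + 1) = ι (a * b, b * a) ∧
      lambdaRho (a : WithOne S) b z (2 * k + 2) = ι Q := by
    induction k with
    | zero =>
      have h1 : lambdaRho (a : WithOne S) b z 1 = ι (a * b, b * a) := by
        simp [lambdaRho, ntStep, z, ι]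
      exact ⟨h1, hQ ▸ hstep 1 _ c (hz_even 0) h1⟩
    | succ k ih =>
      have h1 := hcycle ▸ hstep (2 * k + 2) Q d (hz_odd k) ih.2
      exact ⟨h1, hQ ▸ hstep (2 * k + 3) _ c (hz_even (k + 1)) h1⟩
  have hn := h a b z rfl
  obtain ⟨k, rfl | rfl⟩ : ∃ k, n = 2 * k + 1 ∨ n = 2 * k + 2 := ⟨(n - 1) / 2, by omega⟩
  · rw [(hperiodic k).1] at hn
    exact hab (WithOne.coe_inj.mp hn)
  · rw [(hperiodic k).2] at hn
    exact hQ₁₂ (WithOne.coe_inj.mp hn)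

theorem not_isNT_F7 : ¬ IsNT F7 :=
  not_isNT_of_ntStep_cycle (a := .e12) (b := .e21) (c := .u) (d := .one) (Q := (.e12, .e21))
    (by decide) (by decide) (by decide) (by decide)

instance : DecidablePred (· ∈ F12) := fun x => inferInstanceAs (Decidable (x ∈ F12list))

theorem not_isNT_F12 : ¬ IsNT F12 :=
  not_isNT_of_ntStep_cycle (a := ⟨eT 1 2, by decide⟩) (b := ⟨w2T, by decide⟩)
    (c := ⟨w1T, by decide⟩) (d := ⟨w2T, by decide⟩)
    (Q := (⟨eT 1 2, by decide⟩, ⟨eT 0 0, by decide⟩))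
    (by decide) (by decide) (by decide) (by decide)

theorem isNT_isNDF12_general (S : Type*) [Semigroup S] (h : IsNT S) :
    IsNDF12 S :=
  ⟨⟨h.isBlockGroup, fun _ _ _ _ hf => (h.of_injective hf).isNilpotent⟩,
    fun hd => not_isNT_F7 (h.of_divides hd), fun hd => not_isNT_F12 (h.of_divides hd)⟩

/-- Every finite Neumann–Taylor semigroup is in NDF₁₂. -/
theorem isNT_isNDF12 (S : Type*) [Semigroup S] [Finite S] (h : IsNT S) :
    IsNDF12 S :=
  isNT_isNDF12_general S h
end

section
/- There exists a finite semigroup S such that every subsemigroup of S generated by at most 3 elements is Mal'cev nilpotent, but S itself is not Mal'cev nilpotent. -/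
/-- Every subsemigroup of S generated by at most 3 elements is Mal'cev
nilpotent, but S is not. -/
def MNWitness (S : Type) [Semigroup S] : Prop :=
  ¬ IsMN S ∧
    ∀ A : Finset S, A.card ≤ 3 → IsMN (Subsemigroup.closure (A : Set S))

/-! Take for `S` the Brandt semigroup `B₄` (the empty map and the sixteen partial maps `i ↦ j`
of `Fin 4`) together with the partial bijections `a = (0 ↦ 2, 1 ↦ 3)` and `b = (0 ↦ 3, 1 ↦ 2)`,
all composed left to right. If `λ = (i ↦ j)` and `ρ = (k ↦ l)`, one Mal'cev step through `z`
gives `λ z ρ = (i ↦ l)` if `z j = k` and `ρ z λ = (k ↦ j)` if `z l = i`, and `0` otherwise.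
Starting from `(2 ↦ 0, 3 ↦ 1)` and alternating `b` and `a`, the pair oscillates forever, so `S` is
not Mal'cev nilpotent.

Conversely, `λ₄ ≠ ρ₄` forces `{z₂, z₃} = {a, b}` and makes `λ₂ ≠ ρ₂` two "cross" maps `i ↦ j`
with `2 ≤ i` and `j < 2`. As `a` and `b` are not products, they belong to every generating set of
a subsemigroup containing them. In the subsemigroup generated by `a`, `b` and `w`, a cross map
must begin and end with `w`, because `a` and `b` are undefined at `2, 3` and miss `0, 1`; hence it
is `w`. So a subsemigroup with at most three generators contains at most one cross map, and it
satisfies `λ₄ = ρ₄`. -/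

theorem WithOne.lift_injective {M N : Type*} [Mul M] [MulOneClass N] {f : M →ₙ* N}
    (hf : Function.Injective f) (h1 : ∀ x, f x ≠ 1) : Function.Injective (WithOne.lift f) := by
  intro u v huv
  induction u using WithOne.recOneCoe with
  | one =>
    induction v using WithOne.recOneCoe with
    | one => rfl
    | coe n => exact absurd (by simpa using huv.symm) (h1 n)
  | coe m =>
    induction v using WithOne.recOneCoe with
    | one => exact absurd (by simpa using huv) (h1 m)
    | coe n => exact congrArg _ (hf (by simpa using huv))

theorem WithOne.exists_eq_coe_of_lift_ne_one {M N : Type*} [Mul M] [MulOneClass N]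
    {f : M →ₙ* N} {u : WithOne M} (hu : WithOne.lift f u ≠ 1) : ∃ m : M, u = m := by
  induction u using WithOne.recOneCoe with
  | one => exact absurd (map_one _) hu
  | coe m => exact ⟨m, rfl⟩

section lrho

variable {M N : Type*} [Semigroup M] [Monoid N] (φ : WithOne M →* N) (x y : WithOne M)
  (z : ℕ → WithOne M) (n : ℕ)

theorem map_lrho_succ_fst :
    φ (lrho x y z (n + 1)).1 = φ (lrho x y z n).1 * φ (z (n + 1)) * φ (lrho x y z n).2 := by
  simp only [lrho, map_mul]

theorem map_lrho_succ_snd :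
    φ (lrho x y z (n + 1)).2 = φ (lrho x y z n).2 * φ (z (n + 1)) * φ (lrho x y z n).1 := by
  simp only [lrho, map_mul]

end lrho

theorem ne_zero_and_ne_of_mul_mul_ne {M₀ : Type*} [MonoidWithZero M₀] {u v z : M₀}
    (h : u * z * v ≠ v * z * u) : u ≠ 0 ∧ v ≠ 0 ∧ u ≠ v := by
  refine ⟨?_, ?_, ?_⟩ <;> rintro rfl <;> simp at h

theorem Finset.exists_subset_insert_insert_of_card_le_three {α : Type*} [DecidableEq α]
    {A : Finset α} (hA : A.card ≤ 3) {s t : α} (hs : s ∈ A) (ht : t ∈ A) (hst : s ≠ t) :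
    ∃ w, A ⊆ {s, t, w} := by
  have : Nonempty α := ⟨s⟩
  have hcard : ((A.erase s).erase t).card ≤ 1 := by
    rw [card_erase_of_mem (mem_erase.2 ⟨hst.symm, ht⟩), card_erase_of_mem hs]
    omega
  obtain ⟨w, hw⟩ := card_le_one_iff_subset_singleton.1 hcard
  refine ⟨w, fun x hx => ?_⟩
  by_cases hxs : x = s
  · simp [hxs]
  by_cases hxt : x = t
  · simp [hxt]
  simp [show x = w by simpa using hw (mem_erase.2 ⟨hxt, mem_erase.2 ⟨hxs, hx⟩⟩)]

def PMap (α : Type) := α → Option α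

namespace PMap

variable {α : Type}

instance : MonoidWithZero (PMap α) where
  mul f g x := (f x).bind g
  mul_assoc f g h := funext fun x => Option.bind_assoc (f x) g h
  one := some
  one_mul _ := rfl
  mul_one f := funext fun x => show (f x).bind some = f x by cases f x <;> rfl
  zero _ := none
  zero_mul _ := rfl
  mul_zero f := funext fun x => show (f x).bind (fun _ => none) = none by cases f x <;> rfl

instance [Finite α] : Finite (PMap α) := inferInstanceAs (Finite (α → Option α))

theorem mul_apply (f g : PMap α) (x : α) : (f * g) x = (f x).bind fun y => g y := rfl

theorem zero_apply (x : α) : (0 : PMap α) x = none := rfl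

variable [DecidableEq α]

def single (i j : α) : PMap α := fun x => if x = i then some j else none

theorem single_apply (i j x : α) : single i j x = if x = i then some j else none := rfl

theorem single_ne_zero (i j : α) : single i j ≠ 0 := fun h => by
  simpa [single_apply, zero_apply] using congrFun h i

theorem single_inj {i j k l : α} : single i j = single k l ↔ i = k ∧ j = l := by
  refine ⟨fun h => ?_, fun ⟨rfl, rfl⟩ => rfl⟩
  have := congrFun h i
  simp only [single_apply] at this
  split_ifs at this <;> simp_all

theorem single_mul (i j : α) (g : PMap α) : single i j * g = (g j).elim 0 (single i) := by
  funext x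
  rw [mul_apply, single_apply]
  split_ifs with hx <;> cases hg : g j <;> simp [single_apply, zero_apply, hx, hg]

theorem single_mul_mul_single (i j k l : α) (z : PMap α) :
    single i j * z * single k l = if z j = some k then single i l else 0 := by
  rw [single_mul]
  cases hz : z j with
  | none => simp
  | some m =>
    simp only [Option.elim_some, single_mul, single_apply, Option.some.injEq]
    split_ifs <;> rfl

def brandt : Set (PMap α) := {f | f = 0 ∨ ∃ i j, f = single i j}

theorem single_mem_brandt (i j : α) : single i j ∈ brandt := Or.inr ⟨i, j, rfl⟩

theorem mul_mem_brandt {f : PMap α} (hf : f ∈ brandt) (g : PMap α) : f * g ∈ brandt := by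
  rcases hf with rfl | ⟨i, j, rfl⟩
  · exact Or.inl (zero_mul g)
  · rw [single_mul]
    cases g j with
    | none => exact Or.inl rfl
    | some l => exact single_mem_brandt i l

theorem mul_single_mem_brandt {g : PMap α} (hg : ∀ x y m, g x = some m → g y = some m → x = y)
    (k l : α) : g * single k l ∈ brandt := by
  by_cases h : ∃ x, g x = some k
  · obtain ⟨x, hx⟩ := h
    refine Or.inr ⟨x, l, funext fun y => ?_⟩
    rw [mul_apply, single_apply]
    split_ifs with hy
    · simp [hy, hx, single_apply]
    · cases hgy : g y with
      | none => rfl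
      | some m =>
        have hmk : m ≠ k := fun hmk => hy (hg y x k (hmk ▸ hgy) hx)
        simp [single_apply, hmk]
  · refine Or.inl (funext fun y => ?_)
    rw [mul_apply, zero_apply]
    cases hgy : g y with
    | none => rfl
    | some m =>
      have hmk : m ≠ k := fun hmk => h ⟨y, hmk ▸ hgy⟩
      simp [single_apply, hmk]

theorem eq_of_mem_brandt {f : PMap α} (hf : f ∈ brandt) {x y : α} (hx : f x ≠ none)
    (hy : f y ≠ none) : x = y := by
  rcases hf with rfl | ⟨i, j, rfl⟩
  · exact absurd rfl hx
  · simp only [single_apply, ne_eq, ite_eq_right_iff, reduceCtorEq, imp_false, not_not] at hx hy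
    rw [hx, hy]

theorem exists_swap_of_mul_mul_ne {p q z z' : PMap α} (hp : p ∈ brandt) (hq : q ∈ brandt)
    (hne : p * z * q * z' * (q * z * p) ≠ q * z * p * z' * (p * z * q))
    (h₀ : p * z * q * z' * (q * z * p) ≠ 0) (h₀' : q * z * p * z' * (p * z * q) ≠ 0) :
    ∃ i j k l, j ≠ l ∧ z j = some k ∧ z l = some i ∧ z' l = some k ∧ z' j = some i ∧
      p * z * q = single i l ∧ q * z * p = single k j := by
  rcases hp with rfl | ⟨i, j, rfl⟩
  · simp at h₀
  rcases hq with rfl | ⟨k, l, rfl⟩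
  · simp at h₀
  rw [single_mul_mul_single, single_mul_mul_single] at hne h₀ h₀' ⊢
  by_cases h₁ : z j = some k
  swap
  · simp [h₁] at h₀
  by_cases h₂ : z l = some i
  swap
  · simp [h₂] at h₀'
  simp only [if_pos h₁, if_pos h₂, single_mul_mul_single] at hne h₀ h₀' ⊢
  by_cases h₃ : z' l = some k
  swap
  · simp [h₃] at h₀
  by_cases h₄ : z' j = some i
  swap
  · simp [h₄] at h₀'
  rw [if_pos h₃, if_pos h₄, Ne, single_inj] at hne
  refine ⟨i, j, k, l, ?_, h₁, h₂, h₃, h₄, rfl, rfl⟩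
  rintro rfl
  exact hne ⟨Option.some.inj (h₂.symm.trans h₁), rfl⟩

def undefinedAtOrLeftMul (x : α) (w : PMap α) : Subsemigroup (PMap α) where
  carrier := {f | f x = none ∨ ∃ g, f = w * g}
  mul_mem' := by
    rintro f h (hf | ⟨g, rfl⟩) -
    · exact Or.inl (by rw [mul_apply, hf]; rfl)
    · exact Or.inr ⟨g * h, mul_assoc w g h⟩

def missesOrRightMul (y : α) (w : PMap α) : Subsemigroup (PMap α) where
  carrier := {f | (∀ x, f x ≠ some y) ∨ ∃ g, f = g * w}
  mul_mem' := by
    rintro f h - (hh | ⟨g, rfl⟩)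
    · refine Or.inl fun x hx => ?_
      rw [mul_apply] at hx
      cases hfx : f x with
      | none => simp [hfx] at hx
      | some m => exact hh m (by simpa [hfx] using hx)
    · exact Or.inr ⟨f * g, (mul_assoc f g w).symm⟩

theorem eq_single_of_eq_mul_of_eq_mul {w g g' : PMap α} (hw : w ∈ brandt) {i j : α}
    (h : single i j = w * g) (h' : single i j = g' * w) : w = single i j := by
  rcases hw with rfl | ⟨k, l, rfl⟩
  · exact absurd (h.trans (zero_mul g)) (single_ne_zero i j)
  have hi := congrFun h i
  have hj := congrFun h' i
  simp only [single_apply, mul_apply, if_true] at hi hj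
  obtain rfl : k = i := by
    by_contra hki
    simp [Ne.symm hki] at hi
  obtain rfl : l = j := by
    cases hg : g' k with
    | none => simp [hg] at hj
    | some m =>
      rw [hg, Option.bind_some] at hj
      split_ifs at hj
      exact (Option.some.inj hj).symm
  rfl

end PMap

namespace Witness

open PMap Subsemigroup

def a : PMap (Fin 4) := ![some 2, some 3, none, none]

def b : PMap (Fin 4) := ![some 3, some 2, none, none]

theorem lt_two_le_of_apply_eq_some {g : PMap (Fin 4)} (hg : g = a ∨ g = b) {x y : Fin 4}
    (h : g x = some y) : x < 2 ∧ 2 ≤ y := by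
  rcases hg with rfl | rfl <;> revert x y <;> decide

theorem eq_of_apply_eq_some {g : PMap (Fin 4)} (hg : g = a ∨ g = b) {x y m : Fin 4}
    (hx : g x = some m) (hy : g y = some m) : x = y := by
  rcases hg with rfl | rfl <;> revert x y m <;> decide

theorem apply_eq_none_of_two_le {g : PMap (Fin 4)} (hg : g = a ∨ g = b) {x : Fin 4}
    (hx : 2 ≤ x) : g x = none := by
  cases h : g x with
  | none => rfl
  | some y => exact absurd (lt_two_le_of_apply_eq_some hg h).1 (not_lt.2 hx)

theorem apply_ne_some_of_lt_two {g : PMap (Fin 4)} (hg : g = a ∨ g = b) {y : Fin 4} (hy : y < 2)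
    (x : Fin 4) : g x ≠ some y :=
  fun h => absurd (lt_two_le_of_apply_eq_some hg h).2 (not_le.2 hy)

theorem mul_eq_zero_of_eq_a_or_b {g g' : PMap (Fin 4)} (hg : g = a ∨ g = b)
    (hg' : g' = a ∨ g' = b) : g * g' = 0 := by
  funext x
  rw [mul_apply, zero_apply]
  cases hx : g x with
  | none => rfl
  | some y =>
    cases hy : g' y with
    | none => simp [hy]
    | some _ =>
      exact absurd (lt_two_le_of_apply_eq_some hg' hy).1
        (not_lt.2 (lt_two_le_of_apply_eq_some hg hx).2)

theorem notMem_brandt {g : PMap (Fin 4)} (hg : g = a ∨ g = b) : g ∉ brandt := fun h =>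
  absurd (eq_of_mem_brandt h (x := 0) (y := 1) (by rcases hg with rfl | rfl <;> decide)
    (by rcases hg with rfl | rfl <;> decide)) (by decide)

theorem mul_mem_brandt_of_mem {f g : PMap (Fin 4)} (hf : f = a ∨ f = b ∨ f ∈ brandt)
    (hg : g = a ∨ g = b ∨ g ∈ brandt) : f * g ∈ brandt := by
  obtain hf | hf : (f = a ∨ f = b) ∨ f ∈ brandt := by tauto
  · obtain hg | rfl | ⟨k, l, rfl⟩ : (g = a ∨ g = b) ∨ g = 0 ∨ ∃ k l, g = single k l := by tauto
    · exact Or.inl (mul_eq_zero_of_eq_a_or_b hf hg)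
    · exact Or.inl (mul_zero f)
    · exact mul_single_mem_brandt (fun _ _ _ => eq_of_apply_eq_some hf) k l
  · exact mul_mem_brandt hf g

def S : Subsemigroup (PMap (Fin 4)) where
  carrier := {f | f = a ∨ f = b ∨ f ∈ brandt}
  mul_mem' hf hg := Or.inr (Or.inr (mul_mem_brandt_of_mem hf hg))

theorem a_mem : a ∈ S := Or.inl rfl

theorem b_mem : b ∈ S := Or.inr (Or.inl rfl)

theorem single_mem (i j : Fin 4) : single i j ∈ S := Or.inr (Or.inr (single_mem_brandt i j))

theorem one_notMem : (1 : PMap (Fin 4)) ∉ S := by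
  rintro (h | h | h)
  · exact absurd (congrFun h 2) (by decide)
  · exact absurd (congrFun h 2) (by decide)
  · exact absurd (eq_of_mem_brandt h (x := 0) (y := 1) (by decide) (by decide)) (by decide)

theorem mul_mul_mem_brandt {f z g : PMap (Fin 4)} (hf : f ∈ S) (hz : z = 1 ∨ z ∈ S)
    (hg : g ∈ S) : f * z * g ∈ brandt := by
  rcases hz with rfl | hz
  · rw [mul_one]
    exact mul_mem_brandt_of_mem hf hg
  · exact mul_mem_brandt_of_mem (S.mul_mem hf hz) hg

theorem not_isMN : ¬ IsMN S := by
  rintro ⟨n, -, h⟩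
  let ι : WithOne S →* PMap (Fin 4) := WithOne.lift (MulMemClass.subtype S)
  let x : S := ⟨single 2 0, single_mem 2 0⟩
  let y : S := ⟨single 3 1, single_mem 3 1⟩
  let c : ℕ → WithOne S := fun m =>
    if Even m then ((⟨a, a_mem⟩ : S) : WithOne S) else ((⟨b, b_mem⟩ : S) : WithOne S)
  have orbit : ∀ m, ι (lrho (x : WithOne S) y c m).1 = single 2 (if Even m then 0 else 1) ∧
      ι (lrho (x : WithOne S) y c m).2 = single 3 (if Even m then 1 else 0) := by
    intro m
    induction m with
    | zero => exact ⟨rfl, rfl⟩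
    | succ m ih =>
      rw [map_lrho_succ_fst, map_lrho_succ_snd, ih.1, ih.2, single_mul_mul_single,
        single_mul_mul_single]
      rcases Nat.even_or_odd m with hm | hm
      · simp only [hm, Nat.even_add_one, c, ι]
        exact ⟨if_pos rfl, if_pos rfl⟩
      · simp only [Nat.not_even_iff_odd.2 hm, Nat.even_add_one, c, ι]
        exact ⟨if_pos rfl, if_pos rfl⟩
  have := congrArg ι (h x y c)
  rw [(orbit n).1, (orbit n).2, single_inj] at this
  exact absurd this.1 (by decide)

def cross : Set (PMap (Fin 4)) := {f | ∃ i j, 2 ≤ i ∧ j < 2 ∧ f = single i j}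

theorem cross_subset : cross ⊆ S := by
  rintro _ ⟨i, j, -, -, rfl⟩
  exact single_mem i j

theorem eq_a_b_of_swap {z z' : PMap (Fin 4)} (hz : z = 1 ∨ z ∈ S) (hz' : z' = 1 ∨ z' ∈ S)
    {i j k l : Fin 4} (hjl : j ≠ l) (h₁ : z j = some k) (h₂ : z l = some i)
    (h₃ : z' l = some k) (h₄ : z' j = some i) : z = a ∧ z' = b ∨ z = b ∧ z' = a := by
  have two_points {g : PMap (Fin 4)} (hg : g = 1 ∨ g ∈ S) (hj : g j ≠ none) (hl : g l ≠ none) :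
      g = 1 ∨ g = a ∨ g = b := by
    rcases hg with hg | hg | hg | hg
    exacts [Or.inl hg, Or.inr (Or.inl hg), Or.inr (Or.inr hg),
      absurd (eq_of_mem_brandt hg hj hl) hjl]
  have no_swap {g : PMap (Fin 4)} (hg : g = 1 ∨ g = a ∨ g = b) (hgj : g j = some l)
      (hlj : g l = some j) : False := by
    rcases hg with rfl | hg
    · exact hjl (Option.some.inj hgj)
    · exact absurd (lt_two_le_of_apply_eq_some hg hgj).1
        (not_lt.2 (lt_two_le_of_apply_eq_some hg hlj).2)
  have hz₁ := two_points hz (by simp [h₁]) (by simp [h₂])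
  have hz'₁ := two_points hz' (by simp [h₄]) (by simp [h₃])
  have hza : z = a ∨ z = b := hz₁.resolve_left <| by
    rintro rfl
    obtain rfl := Option.some.inj h₁
    obtain rfl := Option.some.inj h₂
    exact no_swap hz'₁ h₄ h₃
  have hz'a : z' = a ∨ z' = b := hz'₁.resolve_left <| by
    rintro rfl
    obtain rfl := Option.some.inj h₃
    obtain rfl := Option.some.inj h₄
    exact no_swap hz₁ h₁ h₂
  have hzz' : z ≠ z' := by
    rintro rfl
    obtain rfl := Option.some.inj (h₁.symm.trans h₄)
    exact hjl (eq_of_apply_eq_some hza h₁ h₃)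
  rcases hza with rfl | rfl <;> rcases hz'a with rfl | rfl
  exacts [absurd rfl hzz', Or.inl ⟨rfl, rfl⟩, Or.inr ⟨rfl, rfl⟩, absurd rfl hzz']

theorem eq_a_b_and_mem_cross {p q z z' : PMap (Fin 4)} (hp : p ∈ brandt) (hq : q ∈ brandt)
    (hz : z = 1 ∨ z ∈ S) (hz' : z' = 1 ∨ z' ∈ S)
    (hne : p * z * q * z' * (q * z * p) ≠ q * z * p * z' * (p * z * q))
    (h₀ : p * z * q * z' * (q * z * p) ≠ 0) (h₀' : q * z * p * z' * (p * z * q) ≠ 0) :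
    (z = a ∧ z' = b ∨ z = b ∧ z' = a) ∧ p * z * q ≠ q * z * p ∧
      p * z * q ∈ cross ∧ q * z * p ∈ cross := by
  obtain ⟨i, j, k, l, hjl, h₁, h₂, h₃, h₄, hpzq, hqzp⟩ :=
    exists_swap_of_mul_mul_ne hp hq hne h₀ h₀'
  have hzab := eq_a_b_of_swap hz hz' hjl h₁ h₂ h₃ h₄
  have hza : z = a ∨ z = b := hzab.imp And.left And.left
  have hz'a : z' = a ∨ z' = b := hzab.elim (fun h => Or.inr h.2) (fun h => Or.inl h.2)
  have hik : i ≠ k := by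
    rintro rfl
    exact hjl (eq_of_apply_eq_some hz'a h₄ h₃)
  rw [hpzq, hqzp]
  exact ⟨hzab, fun h => hik (single_inj.1 h).1,
    ⟨i, l, (lt_two_le_of_apply_eq_some hza h₂).2, (lt_two_le_of_apply_eq_some hza h₂).1, rfl⟩,
    ⟨k, j, (lt_two_le_of_apply_eq_some hza h₁).2, (lt_two_le_of_apply_eq_some hza h₁).1, rfl⟩⟩

def embed (T : Subsemigroup S) : WithOne T →* PMap (Fin 4) :=
  WithOne.lift ((MulMemClass.subtype S).comp (MulMemClass.subtype T))

theorem embed_injective (T : Subsemigroup S) : Function.Injective (embed T) :=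
  WithOne.lift_injective (Subtype.val_injective.comp Subtype.val_injective)
    fun u hu => one_notMem (hu ▸ u.1.2)

theorem embed_eq_one_or_mem {T : Subsemigroup S} (u : WithOne T) :
    embed T u = 1 ∨ embed T u ∈ S := by
  induction u using WithOne.recOneCoe with
  | one => exact Or.inl (map_one _)
  | coe u => exact Or.inr u.1.2

theorem exists_mem_of_embed_eq {T : Subsemigroup S} {u : WithOne T} {g : PMap (Fin 4)}
    (hu : embed T u = g) (hg : g ∈ S) : ∃ s ∈ T, (s : PMap (Fin 4)) = g := by
  obtain ⟨s, rfl⟩ := WithOne.exists_eq_coe_of_lift_ne_one fun h1 => one_notMem (h1 ▸ hu ▸ hg)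
  exact ⟨s, s.2, hu⟩

theorem exists_cross_of_lrho_ne {T : Subsemigroup S} {x y : T} {c : ℕ → WithOne T}
    (h : (lrho (x : WithOne T) y c 4).1 ≠ (lrho (x : WithOne T) y c 4).2) :
    (∃ s ∈ T, (s : PMap (Fin 4)) = a) ∧ (∃ t ∈ T, (t : PMap (Fin 4)) = b) ∧
      ∃ u ∈ T, ∃ v ∈ T, (u : PMap (Fin 4)) ∈ cross ∧ (v : PMap (Fin 4)) ∈ cross ∧ u ≠ v := by
  let L n := embed T (lrho (x : WithOne T) y c n).1
  let R n := embed T (lrho (x : WithOne T) y c n).2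
  have hL : ∀ n, L (n + 1) = L n * embed T (c (n + 1)) * R n := map_lrho_succ_fst _ _ _ c
  have hR : ∀ n, R (n + 1) = R n * embed T (c (n + 1)) * L n := map_lrho_succ_snd _ _ _ c
  obtain ⟨h₀, h₀', hne⟩ : L 3 ≠ 0 ∧ R 3 ≠ 0 ∧ L 3 ≠ R 3 :=
    ne_zero_and_ne_of_mul_mul_ne (by rw [← hL, ← hR]; exact fun e => h (embed_injective T e))
  have hp : L 1 ∈ brandt := hL 0 ▸ mul_mul_mem_brandt x.1.2 (embed_eq_one_or_mem _) y.1.2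
  have hq : R 1 ∈ brandt := hR 0 ▸ mul_mul_mem_brandt y.1.2 (embed_eq_one_or_mem _) x.1.2
  rw [hL 2, hL 1, hR 1] at h₀
  rw [hR 2, hL 1, hR 1] at h₀'
  rw [hL 2, hR 2, hL 1, hR 1] at hne
  obtain ⟨hab, huv, hu, hv⟩ :=
    eq_a_b_and_mem_cross hp hq (embed_eq_one_or_mem _) (embed_eq_one_or_mem _) hne h₀ h₀'
  rw [← hL 1, ← hR 1] at huv
  rw [← hL 1] at hu
  rw [← hR 1] at hv
  obtain ⟨u, huT, hu'⟩ := exists_mem_of_embed_eq rfl (cross_subset hu)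
  obtain ⟨v, hvT, hv'⟩ := exists_mem_of_embed_eq rfl (cross_subset hv)
  refine ⟨?_, ?_, u, huT, v, hvT, hu' ▸ hu, hv' ▸ hv, fun e => huv (hu'.symm.trans (e ▸ hv'))⟩ <;>
    rcases hab with ⟨h₂, h₃⟩ | ⟨h₂, h₃⟩
  exacts [exists_mem_of_embed_eq h₂ a_mem, exists_mem_of_embed_eq h₃ a_mem,
    exists_mem_of_embed_eq h₃ b_mem, exists_mem_of_embed_eq h₂ b_mem]

theorem mem_of_mem_closure_of_notMem_brandt {A : Set S} {s : S} (hs : s ∈ closure A)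
    (hs' : (s : PMap (Fin 4)) ∉ brandt) : s ∈ A := by
  let T : Subsemigroup S :=
    { carrier := {s | s ∈ A ∨ (s : PMap (Fin 4)) ∈ brandt}
      mul_mem' := fun {f g} _ _ => Or.inr (mul_mem_brandt_of_mem f.2 g.2) }
  exact ((closure_le (S := T).2 fun s hs => Or.inl hs) hs).resolve_right hs'

theorem eq_of_mem_cross_of_mem_closure {s t w x : S} (hs : (s : PMap (Fin 4)) = a)
    (ht : (t : PMap (Fin 4)) = b) (hx : x ∈ closure {s, t, w})
    (hx' : (x : PMap (Fin 4)) ∈ cross) : x = w := by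
  obtain ⟨i, j, hi, hj, hxij⟩ := hx'
  have hl : closure {s, t, w} ≤ (undefinedAtOrLeftMul i (w : PMap (Fin 4))).comap
      (MulMemClass.subtype S) := by
    refine closure_le.2 ?_
    rintro _ (rfl | rfl | rfl)
    · exact Or.inl (apply_eq_none_of_two_le (Or.inl hs) hi)
    · exact Or.inl (apply_eq_none_of_two_le (Or.inr ht) hi)
    · exact Or.inr ⟨1, (mul_one _).symm⟩
  have hr : closure {s, t, w} ≤ (missesOrRightMul j (w : PMap (Fin 4))).comap
      (MulMemClass.subtype S) := by
    refine closure_le.2 ?_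
    rintro _ (rfl | rfl | rfl)
    · exact Or.inl (apply_ne_some_of_lt_two (Or.inl hs) hj)
    · exact Or.inl (apply_ne_some_of_lt_two (Or.inr ht) hj)
    · exact Or.inr ⟨1, (one_mul _).symm⟩
  obtain h | ⟨g, hg⟩ : (x : PMap (Fin 4)) i = none ∨ ∃ g, (x : PMap (Fin 4)) = w * g := hl hx
  · simp [hxij, single_apply] at h
  obtain h | ⟨g', hg'⟩ : (∀ y, (x : PMap (Fin 4)) y ≠ some j) ∨ ∃ g', (x : PMap (Fin 4)) = g' * w :=
    hr hx
  · simpa [hxij, single_apply] using h i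
  rw [hxij] at hg hg'
  have hwi : (w : PMap (Fin 4)) i ≠ none := fun hwi => by
    simpa [single_apply, mul_apply, hwi] using congrFun hg i
  rcases w.2 with hw | hw | hw
  · exact absurd (apply_eq_none_of_two_le (Or.inl hw) hi) hwi
  · exact absurd (apply_eq_none_of_two_le (Or.inr hw) hi) hwi
  · exact Subtype.ext (hxij.trans (eq_single_of_eq_mul_of_eq_mul hw hg hg').symm)

theorem eq_of_mem_cross_of_card_le_three {A : Finset S} (hA : A.card ≤ 3) {s t u v : S}
    (hs : s ∈ closure (A : Set S)) (ht : t ∈ closure (A : Set S)) (hsa : (s : PMap (Fin 4)) = a)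
    (htb : (t : PMap (Fin 4)) = b) (hu : u ∈ closure (A : Set S)) (hv : v ∈ closure (A : Set S))
    (hu' : (u : PMap (Fin 4)) ∈ cross) (hv' : (v : PMap (Fin 4)) ∈ cross) : u = v := by
  classical
  have hsA : s ∈ A := mem_of_mem_closure_of_notMem_brandt hs (hsa ▸ notMem_brandt (Or.inl rfl))
  have htA : t ∈ A := mem_of_mem_closure_of_notMem_brandt ht (htb ▸ notMem_brandt (Or.inr rfl))
  have hst : s ≠ t := fun h => absurd (congrFun (hsa.symm.trans (h ▸ htb)) 0) (by decide)
  obtain ⟨w, hw⟩ := A.exists_subset_insert_insert_of_card_le_three hA hsA htA hst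
  have hAw : closure (A : Set S) ≤ closure {s, t, w} :=
    closure_mono fun x hx => by simpa using hw hx
  exact (eq_of_mem_cross_of_mem_closure hsa htb (hAw hu) hu').trans
    (eq_of_mem_cross_of_mem_closure hsa htb (hAw hv) hv').symm

theorem isMN_closure_of_card_le_three {A : Finset S} (hA : A.card ≤ 3) :
    IsMN (closure (A : Set S)) := by
  refine ⟨4, by norm_num, fun x y c => by_contra fun h => ?_⟩
  obtain ⟨⟨s, hs, hsa⟩, ⟨t, ht, htb⟩, u, hu, v, hv, hu', hv', huv⟩ := exists_cross_of_lrho_ne h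
  exact huv (eq_of_mem_cross_of_card_le_three hA hs ht hsa htb hu hv hu' hv')

end Witness

/-- There is a finite semigroup all of whose 3-generated subsemigroups are
Mal'cev nilpotent and which is not Mal'cev nilpotent. -/
theorem exists_MN_rank_witness :
    ∃ (S : Type) (inst : Semigroup S) (_ : Finite S), @MNWitness S inst :=
  ⟨Witness.S, inferInstance, inferInstance, Witness.not_isMN,
    fun _ hA => Witness.isMN_closure_of_card_le_three hA⟩
end

section
/- Let S be a finite semigroup. If every subsemigroup of S generated by at most 3 elements is in NDF₁₂, then S is in NDF₁₂. -/
/-!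
Every condition defining NDF₁₂ is witnessed by at most three elements. The block-group axiom
involves three elements. `F₇` is generated by `u` and `e₁₁`, and `F₁₂` by `w₁`, `w₂` and
`e₂₃`, so a division of `S` by either restricts to the subsemigroup generated by preimages of
these generators. Finally, a finite group all of whose 2-generated subgroups are nilpotent is
nilpotent: its `p`-elements are then closed under products, so they form a normal `p`-subgroup,
which must be the Sylow `p`-subgroup. Inside a finite group the subgroup generated by two
elements is the subsemigroup they generate, so such subgroups embed into 2-generated
subsemigroups of `S`.
-/

open Subgroup

section FiniteGroups

variable {G : Type*} [Group G]

theorem Subgroup.coe_closure_subset_subsemigroupClosure [Finite G] {s : Set G}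
    (hs : s.Nonempty) : (closure s : Set G) ⊆ Subsemigroup.closure s := by
  have hcl : (closure s : Set G) = {1} ∪ (Subsemigroup.closure s : Set G) := by
    rw [← coe_toSubmonoid, closure_toSubmonoid_of_finite, Submonoid.closure_eq_one_union]
  obtain ⟨x, hx⟩ := hs
  have hone : (1 : G) ∈ Subsemigroup.closure s := by
    have hinv : x⁻¹ ∈ ({1} ∪ (Subsemigroup.closure s : Set G) : Set G) :=
      hcl ▸ inv_mem (subset_closure hx)
    rcases hinv with hinv | hinv
    · rw [Set.mem_singleton_iff, inv_eq_one] at hinv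
      exact hinv ▸ Subsemigroup.subset_closure hx
    · simpa using mul_mem (Subsemigroup.subset_closure hx) hinv
  rw [hcl]
  exact Set.union_subset (Set.singleton_subset_iff.2 hone) subset_rfl

variable {p : ℕ}

def pElements
    (hmul : ∀ a b : G, (∃ m, a ^ p ^ m = 1) → (∃ n, b ^ p ^ n = 1) → ∃ k, (a * b) ^ p ^ k = 1) :
    Subgroup G where
  carrier := {g | ∃ n, g ^ p ^ n = 1}
  one_mem' := ⟨0, one_pow _⟩
  mul_mem' := hmul _ _
  inv_mem' := fun ⟨n, hn⟩ => ⟨n, by rw [inv_pow, hn, inv_one]⟩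

theorem Sylow.normal_of_mul_closed
    (hmul : ∀ a b : G, (∃ m, a ^ p ^ m = 1) → (∃ n, b ^ p ^ n = 1) → ∃ k, (a * b) ^ p ^ k = 1)
    (P : Sylow p G) : (P : Subgroup G).Normal := by
  have hnormal : (pElements hmul).Normal :=
    ⟨fun g ⟨n, hn⟩ c => ⟨n, by rw [conj_pow, hn, mul_one, mul_inv_cancel]⟩⟩
  have hpgroup : IsPGroup p (pElements hmul) := fun ⟨g, n, hn⟩ => ⟨n, Subtype.ext hn⟩
  have hle : (P : Subgroup G) ≤ pElements hmul := fun g hg => by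
    obtain ⟨n, hn⟩ := P.isPGroup' ⟨g, hg⟩
    exact ⟨n, congrArg Subtype.val hn⟩
  rwa [← P.is_maximal' hpgroup hle]

variable [Fact p.Prime]

theorem Sylow.mem_of_pow_eq_one [Finite G] (P : Sylow p G) [(P : Subgroup G).Normal] {g : G}
    {n : ℕ} (hg : g ^ p ^ n = 1) : g ∈ P := by
  have hpg : IsPGroup p (zpowers g) :=
    IsPGroup.of_card_dvd_pow (by rw [Nat.card_zpowers]; exact orderOf_dvd_of_pow_eq_one hg)
  obtain ⟨Q, hQ⟩ := hpg.exists_le_sylow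
  have hQP : Q = P := (P.unique_of_normal inferInstance).instSubsingleton.elim Q P
  exact hQP ▸ hQ (mem_zpowers g)

theorem IsPGroup.closure_of_isNilpotent [Finite G] {s : Set G}
    [Group.IsNilpotent (closure s)] (hs : ∀ g ∈ s, ∃ n, g ^ p ^ n = 1) :
    IsPGroup p (closure s) := by
  obtain ⟨P⟩ : Nonempty (Sylow p (closure s)) := inferInstance
  have hsP : s ⊆ (P : Subgroup (closure s)).map (closure s).subtype := fun g hg => by
    obtain ⟨n, hn⟩ := hs g hg
    exact ⟨⟨g, subset_closure hg⟩, P.mem_of_pow_eq_one (n := n) (Subtype.ext hn), rfl⟩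
  exact (P.isPGroup'.map _).to_le ((closure_le _).2 hsP)

theorem Group.isNilpotent_of_forall_closure_pair [Finite G]
    (h : ∀ a b : G, Group.IsNilpotent (closure {a, b})) : Group.IsNilpotent G := by
  refine (Group.isNilpotent_of_finite_tfae.out 0 3).2 ?_
  intro p _ P
  refine P.normal_of_mul_closed fun a b ha hb => ?_
  have hpair : IsPGroup p (closure {a, b}) := by
    have := h a b
    exact IsPGroup.closure_of_isNilpotent (by rintro g (rfl | rfl) <;> assumption)
  obtain ⟨k, hk⟩ := hpair ⟨a * b, mul_mem (subset_closure (by simp)) (subset_closure (by simp))⟩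
  exact ⟨k, congrArg Subtype.val hk⟩

end FiniteGroups

theorem MulHom.exists_injective_closure_image {G S : Type*} [Group G] [Finite G] [Mul S]
    (f : G →ₙ* S) (hf : Function.Injective f) {s : Set G} (hs : s.Nonempty) :
    ∃ g : closure s →ₙ* Subsemigroup.closure (f '' s), Function.Injective g := by
  have hmaps : ∀ k : closure s, f k ∈ Subsemigroup.closure (f '' s) := fun k => by
    rw [← MulHom.map_mclosure]
    exact ⟨k, coe_closure_subset_subsemigroupClosure hs k.2, rfl⟩
  exact ⟨(f.domRestrict (closure s)).codRestrict _ hmaps,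
    fun a b hab => Subtype.ext (hf (congrArg Subtype.val hab))⟩

theorem isBlockGroup_of_closure_triple {S : Type*} [Semigroup S]
    (h : ∀ s x y : S, IsBlockGroup (Subsemigroup.closure ({s, x, y} : Set S))) :
    IsBlockGroup S := by
  intro s x y hx hy
  have mem : ∀ {z}, z ∈ ({s, x, y} : Set S) → z ∈ Subsemigroup.closure ({s, x, y} : Set S) :=
    fun hz => Subsemigroup.subset_closure hz
  have := h s x y ⟨s, mem (by simp)⟩ ⟨x, mem (by simp)⟩ ⟨y, mem (by simp)⟩
    ⟨Subtype.ext hx.1, Subtype.ext hx.2⟩ ⟨Subtype.ext hy.1, Subtype.ext hy.2⟩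
  exact congrArg Subtype.val this

theorem Divides.of_surjective {S T : Type*} [Mul S] [Mul T] {f : T →ₙ* S}
    (hf : Function.Surjective f) : Divides S T :=
  ⟨⊤, f.comp (Subsemigroup.topEquiv : (⊤ : Subsemigroup T) ≃* T).toMulHom,
    hf.comp Subsemigroup.topEquiv.surjective⟩

theorem Divides.exists_finset_closure {S T : Type*} [Mul S] [Mul T] {B : Finset S}
    (hB : Subsemigroup.closure (B : Set S) = ⊤) (h : Divides S T) :
    ∃ A : Finset T, A.card ≤ B.card ∧ Divides S (Subsemigroup.closure (A : Set T)) := by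
  classical
  obtain ⟨U, f, hf⟩ := h
  choose lift hlift using hf
  let A := B.image fun b => (lift b : T)
  have hAU : Subsemigroup.closure (A : Set T) ≤ U := Subsemigroup.closure_le.2 fun t ht => by
    obtain ⟨b, -, rfl⟩ := Finset.mem_image.1 ht
    exact (lift b).2
  let φ := f.comp (Subsemigroup.inclusion hAU)
  have hBφ : (B : Set S) ⊆ φ.srange := fun b hb =>
    ⟨⟨lift b, Subsemigroup.subset_closure (Finset.mem_image_of_mem _ hb)⟩, hlift b⟩
  refine ⟨A, Finset.card_image_le, Divides.of_surjective (f := φ) ?_⟩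
  rw [← MulHom.srange_eq_top_iff_surjective, eq_top_iff, ← hB]
  exact Subsemigroup.closure_le.2 hBφ

theorem F7.closure_u_e11 : Subsemigroup.closure (({u, e11} : Finset F7) : Set F7) = ⊤ := by
  have hu : u ∈ Subsemigroup.closure (({u, e11} : Finset F7) : Set F7) :=
    Subsemigroup.subset_closure (by simp)
  have he : e11 ∈ Subsemigroup.closure (({u, e11} : Finset F7) : Set F7) :=
    Subsemigroup.subset_closure (by simp)
  refine eq_top_iff.2 fun x _ => ?_
  cases x
  exacts [mul_mem (mul_mem he hu) he, mul_mem hu hu, hu, he, mul_mem he hu, mul_mem hu he,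
    mul_mem (mul_mem hu he) hu]

namespace F12

def w1 : F12 := ⟨w1T, by simp [F12, F12list]⟩
def w2 : F12 := ⟨w2T, by simp [F12, F12list]⟩
-- The points `1, 2, 3` are the indices `0, 1, 2` of `Fin 4`, so `eT 1 2` is `e₂₃`.
def e23 : F12 := ⟨eT 1 2, by simp [F12, F12list]⟩

theorem closure_w1_w2_e23 :
    Subsemigroup.closure (({w1, w2, e23} : Finset F12) : Set F12) = ⊤ := by
  set C := Subsemigroup.closure (({w1, w2, e23} : Finset F12) : Set F12)
  have h1 : w1 ∈ C := Subsemigroup.subset_closure (by simp)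
  have h2 : w2 ∈ C := Subsemigroup.subset_closure (by simp)
  have h3 : e23 ∈ C := Subsemigroup.subset_closure (by simp)
  have mem_of_val_eq : ∀ {x : F12} {y : Tr4} {hy : y ∈ F12}, x ∈ C → x.1 = y → ⟨y, hy⟩ ∈ C :=
    fun hx hxy => by subst hxy; exact hx
  refine eq_top_iff.2 fun ⟨z, hz⟩ _ => ?_
  simp only [F12, F12list, Subsemigroup.mem_mk, Set.mem_ofPred_eq, List.mem_cons,
    List.not_mem_nil, or_false] at hz
  rcases hz with rfl | rfl | rfl | rfl | rfl | rfl | rfl | rfl | rfl | rfl | rfl | rfl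
  · exact mem_of_val_eq (mul_mem (mul_mem h1 h1) h3) (by decide)
  · exact mem_of_val_eq (mul_mem h1 h1) (by decide)
  · exact mem_of_val_eq (mul_mem h1 h2) (by decide)
  · exact mem_of_val_eq (mul_mem (mul_mem h1 h2) h3) (by decide)
  · exact mem_of_val_eq (mul_mem h3 h2) (by decide)
  · exact mem_of_val_eq (mul_mem h3 h1) (by decide)
  · exact h3
  · exact mem_of_val_eq (mul_mem h2 h1) (by decide)
  · exact mem_of_val_eq (mul_mem h2 h2) (by decide)
  · exact mem_of_val_eq (mul_mem (mul_mem h2 h2) h3) (by decide)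
  · exact h1
  · exact h2

end F12

theorem isNDF12_of_three_generated_general (S : Type*) [Semigroup S]
    (h : ∀ A : Finset S, A.card ≤ 3 →
      IsNDF12 (Subsemigroup.closure (A : Set S))) :
    IsNDF12 S := by
  classical
  have h3 : ∀ s x y : S, IsNDF12 (Subsemigroup.closure ({s, x, y} : Set S)) := fun s x y => by
    have := h {s, x, y} Finset.card_le_three
    rwa [Finset.coe_insert, Finset.coe_pair] at this
  refine ⟨⟨isBlockGroup_of_closure_triple fun s x y => (h3 s x y).1.1, ?_⟩, ?_, ?_⟩
  · intro G _ _ f hf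
    refine Group.isNilpotent_of_forall_closure_pair fun a b => ?_
    obtain ⟨g, hg⟩ := f.exists_injective_closure_image hf (s := {a, b}) (Set.insert_nonempty _ _)
    have hnil := (h3 (f a) (f a) (f b)).1.2
    rw [Set.insert_eq_of_mem (Set.mem_insert _ _), ← Set.image_pair] at hnil
    exact hnil _ g hg
  · intro hdiv
    obtain ⟨A, hA, hdivA⟩ := hdiv.exists_finset_closure F7.closure_u_e11
    exact (h A (hA.trans (by decide))).2.1 hdivA
  · intro hdiv
    obtain ⟨A, hA, hdivA⟩ := hdiv.exists_finset_closure F12.closure_w1_w2_e23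
    exact (h A (hA.trans Finset.card_le_three)).2.2 hdivA

/-- If every subsemigroup of a finite semigroup S generated by at most 3
elements is in NDF₁₂, then S is in NDF₁₂. -/
theorem isNDF12_of_three_generated (S : Type*) [Semigroup S] [Finite S]
    (h : ∀ A : Finset S, A.card ≤ 3 →
      IsNDF12 (Subsemigroup.closure (A : Set S))) :
    IsNDF12 S :=
  isNDF12_of_three_generated_general S h
end

section
/- Every finite aperiodic inverse semigroup is Mal'cev nilpotent. -/
class IsInverseSemigroup (S : Type*) [Semigroup S] [Inv S] : Prop where
  isInverse_iff : ∀ a x : S, a * x * a = a ∧ x * a * x = x ↔ x = a⁻¹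

namespace IsInverseSemigroup

variable {S : Type*} [Semigroup S] [Inv S] [IsInverseSemigroup S] {a e f x : S}

theorem mul_inv_mul (a : S) : a * a⁻¹ * a = a := ((isInverse_iff a a⁻¹).2 rfl).1

theorem inv_mul_inv (a : S) : a⁻¹ * a * a⁻¹ = a⁻¹ := ((isInverse_iff a a⁻¹).2 rfl).2

theorem eq_inv_of_mul_mul (h₁ : a * x * a = a) (h₂ : x * a * x = x) : x = a⁻¹ :=
  (isInverse_iff a x).1 ⟨h₁, h₂⟩

theorem inv_inv (a : S) : a⁻¹⁻¹ = a :=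
  (eq_inv_of_mul_mul (inv_mul_inv a) (mul_inv_mul a)).symm

theorem inv_eq_self (he : IsIdempotentElem e) : e⁻¹ = e :=
  (eq_inv_of_mul_mul (by rw [he.eq, he.eq]) (by rw [he.eq, he.eq])).symm

theorem isIdempotentElem_mul_inv (a : S) : IsIdempotentElem (a * a⁻¹) := by
  rw [IsIdempotentElem, ← mul_assoc, mul_inv_mul]

theorem isIdempotentElem_inv_mul (a : S) : IsIdempotentElem (a⁻¹ * a) := by
  rw [IsIdempotentElem, ← mul_assoc, inv_mul_inv]

theorem isIdempotentElem_mul (he : IsIdempotentElem e) (hf : IsIdempotentElem f) :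
    IsIdempotentElem (e * f) := by
  have hx : f * (e * f)⁻¹ * e = (e * f)⁻¹ := by
    apply eq_inv_of_mul_mul
    · calc e * f * (f * (e * f)⁻¹ * e) * (e * f) = e * f * (e * f)⁻¹ * (e * f) := by
            simp only [mul_assoc, hf.mul_self_mul, he.mul_self_mul]
        _ = e * f := mul_inv_mul _
    · calc f * (e * f)⁻¹ * e * (e * f) * (f * (e * f)⁻¹ * e)
            = f * ((e * f)⁻¹ * (e * f) * (e * f)⁻¹) * e := by
            simp only [mul_assoc, hf.mul_self_mul, he.mul_self_mul]
        _ = f * (e * f)⁻¹ * e := by rw [inv_mul_inv, mul_assoc]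
  have hxx : IsIdempotentElem (e * f)⁻¹ := by
    calc (e * f)⁻¹ * (e * f)⁻¹ = f * (e * f)⁻¹ * e * (f * (e * f)⁻¹ * e) := by rw [hx]
      _ = f * ((e * f)⁻¹ * (e * f) * (e * f)⁻¹) * e := by simp only [mul_assoc]
      _ = (e * f)⁻¹ := by rw [inv_mul_inv, hx]
  rw [← inv_inv (e * f), inv_eq_self hxx]
  exact hxx

theorem commute_of_isIdempotentElem (he : IsIdempotentElem e) (hf : IsIdempotentElem f) :
    Commute e f := by
  have hef := isIdempotentElem_mul he hf
  have hfe := isIdempotentElem_mul hf he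
  have : f * e = (e * f)⁻¹ := by
    apply eq_inv_of_mul_mul
    · calc e * f * (f * e) * (e * f) = e * f * (e * f) := by
            simp only [mul_assoc, hf.mul_self_mul, he.mul_self_mul]
        _ = e * f := hef.eq
    · calc f * e * (e * f) * (f * e) = f * e * (f * e) := by
            simp only [mul_assoc, hf.mul_self_mul, he.mul_self_mul]
        _ = f * e := hfe.eq
  rw [Commute, SemiconjBy, this, inv_eq_self hef]

theorem mul_inv_rev (a b : S) : (a * b)⁻¹ = b⁻¹ * a⁻¹ := by
  have hc := commute_of_isIdempotentElem (isIdempotentElem_mul_inv b)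
    (isIdempotentElem_inv_mul a)
  symm
  apply eq_inv_of_mul_mul
  · calc a * b * (b⁻¹ * a⁻¹) * (a * b) = a * (b * b⁻¹ * (a⁻¹ * a)) * b := by
          simp only [mul_assoc]
      _ = a * a⁻¹ * a * (b * b⁻¹ * b) := by rw [hc.eq]; simp only [mul_assoc]
      _ = a * b := by rw [mul_inv_mul, mul_inv_mul]
  · calc b⁻¹ * a⁻¹ * (a * b) * (b⁻¹ * a⁻¹)
          = b⁻¹ * (a⁻¹ * a * (b * b⁻¹)) * a⁻¹ := by simp only [mul_assoc]
      _ = b⁻¹ * b * b⁻¹ * (a⁻¹ * a * a⁻¹) := by rw [← hc.eq]; simp only [mul_assoc]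
      _ = b⁻¹ * a⁻¹ := by rw [inv_mul_inv, inv_mul_inv]

end IsInverseSemigroup

instance {S : Type*} [Semigroup S] [Inv S] [IsInverseSemigroup S] :
    IsInverseSemigroup (WithOne S) where
  isInverse_iff a x := by
    induction a using WithOne.cases_on <;> induction x using WithOne.cases_on
    · simp
    · simp [← WithOne.coe_mul]
    · simp [← WithOne.coe_inv]
    · intro t s
      norm_cast
      exact IsInverseSemigroup.isInverse_iff s t

instance {S : Type*} [Finite S] : Finite (WithOne S) := inferInstanceAs (Finite (Option S))

section Aperiodic

variable {M : Type*} [Monoid M] {n : ℕ}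

theorem eq_of_pow_succ_eq_of_mul_eq_of_mul_eq {e g h : M} (hg : g ^ (n + 1) = g ^ n)
    (hgh : g * h = e) (hge : g * e = g) : g = e := by
  have hpow : ∀ k, g ^ (k + 1) * h ^ (k + 1) = e := by
    intro k
    induction k with
    | zero => simpa using hgh
    | succ k ih =>
      calc g ^ (k + 2) * h ^ (k + 2) = g * (g ^ (k + 1) * h ^ (k + 1)) * h := by
            rw [pow_succ' g, pow_succ h]; simp only [mul_assoc]
        _ = e := by rw [ih, hge, hgh]
  have hg' : g ^ (n + 1 + 1) = g ^ (n + 1) :=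
    (pow_succ g (n + 1)).trans ((congrArg (· * g) hg).trans (pow_succ g n).symm)
  calc g = g * (g ^ (n + 1) * h ^ (n + 1)) := by rw [hpow, hge]
    _ = g ^ (n + 1) * h ^ (n + 1) := by rw [← mul_assoc, ← pow_succ', hg']
    _ = e := hpow n

theorem eq_of_pow_succ_eq_of_mul_swap {e s u : M} (hu : u ^ (n + 1) = u ^ n)
    (h₁ : e * u = s) (h₂ : s * u = e) : s = e := by
  have heven : ∀ k, e * u ^ (2 * k) = e := by
    intro k
    induction k with
    | zero => simp
    | succ k ih => rw [mul_add_one, pow_add, pow_two, ← mul_assoc, ← mul_assoc, ih, h₁, h₂]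
  have hodd : u ^ (2 * n + 1) = u ^ (2 * n) := by
    rw [two_mul, add_assoc, pow_add, hu, ← pow_add]
  calc s = e * u ^ (2 * n) * u := by rw [heven, h₁]
    _ = e := by rw [mul_assoc, ← pow_succ, hodd, heven]

end Aperiodic

section Ideals

variable {M : Type*} [Monoid M]

def rightIdeal (x : M) : Set M := Set.range (x * ·)

def leftIdeal (x : M) : Set M := Set.range (· * x)

theorem mem_rightIdeal_self (x : M) : x ∈ rightIdeal x := ⟨1, mul_one x⟩

theorem mem_leftIdeal_self (x : M) : x ∈ leftIdeal x := ⟨1, one_mul x⟩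

theorem rightIdeal_mul_subset (x y : M) : rightIdeal (x * y) ⊆ rightIdeal x := by
  rintro _ ⟨u, rfl⟩
  exact ⟨y * u, (mul_assoc x y u).symm⟩

theorem leftIdeal_mul_subset (x y : M) : leftIdeal (x * y) ⊆ leftIdeal y := by
  rintro _ ⟨u, rfl⟩
  exact ⟨u * x, mul_assoc u x y⟩

/-- `x * y * z` lies in `R_x ∩ L_z`, for Green's relations `ℛ` and `ℒ`. -/
def IsRLProduct (x y z : M) : Prop :=
  rightIdeal (x * y * z) = rightIdeal x ∧ leftIdeal (x * y * z) = leftIdeal z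

theorem IsRLProduct.rightIdeal_mul_eq {x y z : M} (h : IsRLProduct x y z) :
    rightIdeal (x * y) = rightIdeal x :=
  (rightIdeal_mul_subset x y).antisymm (h.1 ▸ rightIdeal_mul_subset (x * y) z)

theorem IsRLProduct.leftIdeal_mul_eq {x y z : M} (h : IsRLProduct x y z) :
    leftIdeal (y * z) = leftIdeal z :=
  (leftIdeal_mul_subset y z).antisymm (h.2 ▸ mul_assoc x y z ▸ leftIdeal_mul_subset x (y * z))

end Ideals

namespace IsInverseSemigroup

variable {M : Type*} [Monoid M] [Inv M] [IsInverseSemigroup M] {a b w x y z : M} {n : ℕ}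

theorem mul_inv_mul_mul_inv_of_mem_rightIdeal (h : x ∈ rightIdeal y) :
    y * y⁻¹ * (x * x⁻¹) = x * x⁻¹ := by
  obtain ⟨u, rfl⟩ := h
  simp only [← mul_assoc, mul_inv_mul]

theorem inv_mul_mul_inv_mul_of_mem_leftIdeal (h : x ∈ leftIdeal y) :
    x⁻¹ * x * (y⁻¹ * y) = x⁻¹ * x := by
  obtain ⟨u, rfl⟩ := h
  rw [mul_assoc, mul_assoc u, ← mul_assoc y, mul_inv_mul]

theorem mul_inv_eq_of_rightIdeal_eq (h : rightIdeal x = rightIdeal y) :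
    x * x⁻¹ = y * y⁻¹ := by
  have hx := mul_inv_mul_mul_inv_of_mem_rightIdeal (h ▸ mem_rightIdeal_self x)
  have hy := mul_inv_mul_mul_inv_of_mem_rightIdeal (h.symm ▸ mem_rightIdeal_self y)
  rw [← hx, (commute_of_isIdempotentElem (isIdempotentElem_mul_inv y)
    (isIdempotentElem_mul_inv x)).eq, hy]

theorem inv_mul_eq_of_leftIdeal_eq (h : leftIdeal x = leftIdeal y) : x⁻¹ * x = y⁻¹ * y := by
  have hx := inv_mul_mul_inv_mul_of_mem_leftIdeal (h ▸ mem_leftIdeal_self x)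
  have hy := inv_mul_mul_inv_mul_of_mem_leftIdeal (h.symm ▸ mem_leftIdeal_self y)
  rw [← hx, (commute_of_isIdempotentElem (isIdempotentElem_inv_mul x)
    (isIdempotentElem_inv_mul y)).eq, hy]

/-- The Miller–Clifford theorem, in an inverse monoid. -/
theorem inv_mul_eq_mul_inv_of_rightIdeal_of_leftIdeal (hR : rightIdeal (x * y) = rightIdeal x)
    (hL : leftIdeal (x * y) = leftIdeal y) : x⁻¹ * x = y * y⁻¹ := by
  have hd := isIdempotentElem_inv_mul x
  have hr := isIdempotentElem_mul_inv y
  have hc := commute_of_isIdempotentElem hd hr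
  have h₁ : x⁻¹ * x * (y * y⁻¹) = x⁻¹ * x := by
    calc x⁻¹ * x * (y * y⁻¹) = x⁻¹ * x * (y * y⁻¹) * (x⁻¹ * x) := by
          rw [hc.eq, hd.mul_mul_self]
      _ = x⁻¹ * (x * y * (x * y)⁻¹) * x := by rw [mul_inv_rev]; simp only [mul_assoc]
      _ = x⁻¹ * x := by rw [mul_inv_eq_of_rightIdeal_eq hR, ← mul_assoc, inv_mul_inv]
  have h₂ : y * y⁻¹ * (x⁻¹ * x) = y * y⁻¹ := by
    calc y * y⁻¹ * (x⁻¹ * x) = y * y⁻¹ * (x⁻¹ * x) * (y * y⁻¹) := by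
          rw [← hc.eq, hr.mul_mul_self]
      _ = y * ((x * y)⁻¹ * (x * y)) * y⁻¹ := by rw [mul_inv_rev]; simp only [mul_assoc]
      _ = y * y⁻¹ := by rw [inv_mul_eq_of_leftIdeal_eq hL, ← mul_assoc, mul_inv_mul]
  rw [← h₁, hc.eq, h₂]

theorem eq_of_mul_inv_eq_of_inv_mul_eq (hap : ∀ x : M, x ^ (n + 1) = x ^ n)
    (hR : x * x⁻¹ = y * y⁻¹) (hL : x⁻¹ * x = y⁻¹ * y) : x = y := by
  -- `x y⁻¹` lies in the group `H_{x x⁻¹}`, which aperiodicity makes trivial.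
  have hxy : x * y⁻¹ = x * x⁻¹ := by
    refine eq_of_pow_succ_eq_of_mul_eq_of_mul_eq (hap _) (h := y * x⁻¹) ?_ ?_
    · calc x * y⁻¹ * (y * x⁻¹) = x * (y⁻¹ * y) * x⁻¹ := by simp only [mul_assoc]
        _ = x * x⁻¹ := by rw [← hL, ← mul_assoc, mul_inv_mul]
    · rw [hR, ← mul_assoc, mul_assoc x, mul_assoc x, inv_mul_inv]
  calc x = x * (y⁻¹ * y) := by rw [← hL, ← mul_assoc, mul_inv_mul]
    _ = y := by rw [← mul_assoc, hxy, hR, mul_inv_mul]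

theorem eq_inv_of_mul_inv_eq_of_inv_mul_eq (hap : ∀ x : M, x ^ (n + 1) = x ^ n)
    (hR : x * x⁻¹ = y⁻¹ * y) (hL : x⁻¹ * x = y * y⁻¹) : x = y⁻¹ :=
  eq_of_mul_inv_eq_of_inv_mul_eq hap (by rwa [inv_inv]) (by rwa [inv_inv])

theorem _root_.IsRLProduct.mul_inv_prefix (h : IsRLProduct x y z) :
    x * y * (x * y)⁻¹ = x * x⁻¹ :=
  mul_inv_eq_of_rightIdeal_eq h.rightIdeal_mul_eq

theorem _root_.IsRLProduct.inv_mul_suffix (h : IsRLProduct x y z) :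
    (y * z)⁻¹ * (y * z) = z⁻¹ * z :=
  inv_mul_eq_of_leftIdeal_eq h.leftIdeal_mul_eq

theorem _root_.IsRLProduct.inv_mul_prefix (h : IsRLProduct x y z) :
    (x * y)⁻¹ * (x * y) = z * z⁻¹ :=
  inv_mul_eq_mul_inv_of_rightIdeal_of_leftIdeal (h.1.trans h.rightIdeal_mul_eq.symm) h.2

theorem _root_.IsRLProduct.mul_inv_suffix (h : IsRLProduct x y z) :
    y * z * (y * z)⁻¹ = x⁻¹ * x := by
  have hR : rightIdeal (x * (y * z)) = rightIdeal x := mul_assoc x y z ▸ h.1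
  have hL : leftIdeal (x * (y * z)) = leftIdeal (y * z) :=
    (mul_assoc x y z ▸ h.2).trans h.leftIdeal_mul_eq.symm
  exact (inv_mul_eq_mul_inv_of_rightIdeal_of_leftIdeal hR hL).symm

theorem _root_.IsRLProduct.prefix_eq_inv (hap : ∀ x : M, x ^ (n + 1) = x ^ n)
    (h₁ : IsRLProduct a z b) (h₂ : IsRLProduct b z a) : b * z = (a * z)⁻¹ :=
  eq_inv_of_mul_inv_eq_of_inv_mul_eq hap (h₂.mul_inv_prefix.trans h₁.inv_mul_prefix.symm)
    (h₂.inv_mul_prefix.trans h₁.mul_inv_prefix.symm)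

theorem _root_.IsRLProduct.suffix_eq_inv (hap : ∀ x : M, x ^ (n + 1) = x ^ n)
    (h₁ : IsRLProduct a z b) (h₂ : IsRLProduct b z a) : z * b = (z * a)⁻¹ :=
  eq_inv_of_mul_inv_eq_of_inv_mul_eq hap (h₁.mul_inv_suffix.trans h₂.inv_mul_suffix.symm)
    (h₁.inv_mul_suffix.trans h₂.mul_inv_suffix.symm)

theorem _root_.IsRLProduct.mul_mul_eq_prefix (hap : ∀ x : M, x ^ (n + 1) = x ^ n)
    (h₁ : IsRLProduct a z b) (h₂ : IsRLProduct b z a)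
    (h₃ : IsRLProduct (a * z * b) w (b * z * a)) : a * z * b * w = a * z := by
  refine eq_of_mul_inv_eq_of_inv_mul_eq hap ?_ ?_
  · rw [h₃.mul_inv_prefix, mul_inv_eq_of_rightIdeal_eq h₁.1, h₁.mul_inv_prefix]
  · rw [h₃.inv_mul_prefix, mul_inv_eq_of_rightIdeal_eq h₂.1, h₁.inv_mul_prefix]

theorem eq_of_isRLProduct (hap : ∀ x : M, x ^ (n + 1) = x ^ n)
    (h₁ : IsRLProduct a z b) (h₂ : IsRLProduct b z a)
    (h₃ : IsRLProduct (a * z * b) w (b * z * a))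
    (h₄ : IsRLProduct (b * z * a) w (a * z * b)) : a = b := by
  have hbz := h₁.prefix_eq_inv hap h₂
  have hzb := h₁.suffix_eq_inv hap h₂
  have hazbw := h₁.mul_mul_eq_prefix hap h₂ h₃
  have hbzaw := h₂.mul_mul_eq_prefix hap h₁ h₄
  -- Right multiplication by `z⁻¹ w` swaps `a a⁻¹` and `a z`; aperiodicity forces them equal.
  have hs : a * z = a * a⁻¹ := by
    refine eq_of_pow_succ_eq_of_mul_swap (hap (z⁻¹ * w)) ?_ ?_
    · calc a * a⁻¹ * (z⁻¹ * w) = a * (z * a)⁻¹ * w := by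
            rw [mul_inv_rev]; simp only [mul_assoc]
        _ = a * z := by rw [← hzb, ← mul_assoc, hazbw]
    · calc a * z * (z⁻¹ * w) = a * z * (b * b⁻¹) * (z⁻¹ * w) := by
            rw [← h₁.inv_mul_prefix, ← mul_assoc (a * z) (a * z)⁻¹, mul_inv_mul]
        _ = a * z * (b * (z * b)⁻¹ * w) := by rw [mul_inv_rev]; simp only [mul_assoc]
        _ = a * z * (a * z)⁻¹ := by rw [hzb, inv_inv, ← mul_assoc b, hbzaw, hbz]
        _ = a * a⁻¹ := h₁.mul_inv_prefix
  have he := isIdempotentElem_mul_inv a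
  have hb : b * b⁻¹ = a * a⁻¹ := by rw [← h₁.inv_mul_prefix, hs, inv_eq_self he, he.eq]
  calc a = b * z * a := by rw [hbz, hs, inv_eq_self he, mul_inv_mul]
    _ = b * b⁻¹ * z⁻¹ := by
      rw [mul_assoc, ← inv_inv (z * a), ← hzb, mul_inv_rev, ← mul_assoc]
    _ = a * a⁻¹ * z⁻¹ := by rw [hb]
    _ = a * z * b := by rw [mul_assoc a z, hzb, mul_inv_rev, ← mul_assoc]
    _ = b := by rw [hs, ← hb, mul_inv_mul]

end IsInverseSemigroup

section Weight

variable {M : Type*} [Monoid M] [Finite M]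

theorem ncard_rightIdeal_add_ncard_leftIdeal_le (x y z : M) :
    (rightIdeal (x * y * z)).ncard + (leftIdeal (x * y * z)).ncard ≤
      (rightIdeal x).ncard + (leftIdeal z).ncard :=
  add_le_add
    (Set.ncard_le_ncard ((rightIdeal_mul_subset _ z).trans (rightIdeal_mul_subset x y)))
    (Set.ncard_le_ncard (leftIdeal_mul_subset (x * y) z))

theorem IsRLProduct.of_ncard_le {x y z : M}
    (h : (rightIdeal x).ncard + (leftIdeal z).ncard ≤
      (rightIdeal (x * y * z)).ncard + (leftIdeal (x * y * z)).ncard) :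
    IsRLProduct x y z := by
  have hR : rightIdeal (x * y * z) ⊆ rightIdeal x :=
    (rightIdeal_mul_subset _ z).trans (rightIdeal_mul_subset x y)
  have hL := leftIdeal_mul_subset (x * y) z
  have hR' := Set.ncard_le_ncard hR
  have hL' := Set.ncard_le_ncard hL
  exact ⟨Set.eq_of_subset_of_ncard_le hR (by omega),
    Set.eq_of_subset_of_ncard_le hL (by omega)⟩

noncomputable def idealWeight (a b : M) : ℕ :=
  (rightIdeal a).ncard + (leftIdeal a).ncard + (rightIdeal b).ncard + (leftIdeal b).ncard

theorem idealWeight_le_four_mul_card (a b : M) : idealWeight a b ≤ 4 * Nat.card M := by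
  unfold idealWeight
  have := Set.ncard_le_card (rightIdeal a)
  have := Set.ncard_le_card (leftIdeal a)
  have := Set.ncard_le_card (rightIdeal b)
  have := Set.ncard_le_card (leftIdeal b)
  omega

theorem idealWeight_mul_mul_le (a b z : M) :
    idealWeight (a * z * b) (b * z * a) ≤ idealWeight a b := by
  unfold idealWeight
  have := ncard_rightIdeal_add_ncard_leftIdeal_le a z b
  have := ncard_rightIdeal_add_ncard_leftIdeal_le b z a
  omega

theorem isRLProduct_of_idealWeight_le {a b z : M}
    (h : idealWeight a b ≤ idealWeight (a * z * b) (b * z * a)) :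
    IsRLProduct a z b ∧ IsRLProduct b z a := by
  unfold idealWeight at h
  have := ncard_rightIdeal_add_ncard_leftIdeal_le a z b
  have := ncard_rightIdeal_add_ncard_leftIdeal_le b z a
  exact ⟨.of_ncard_le (by omega), .of_ncard_le (by omega)⟩

end Weight

theorem Antitone.exists_le_two_mul_eq {f : ℕ → ℕ} (hf : Antitone f) :
    ∃ k ≤ 2 * f 0, f (k + 2) = f k := by
  by_contra! h
  have hdrop : ∀ j ≤ f 0 + 1, f (2 * j) + j ≤ f 0 := by
    intro j hj
    induction j with
    | zero => simp
    | succ j ih =>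
      have := h (2 * j) (by omega)
      have := hf (show 2 * j ≤ 2 * j + 2 by omega)
      have := ih (by omega)
      rw [mul_add_one]
      omega
  have := hdrop (f 0 + 1) le_rfl
  omega

theorem eq_of_malcev_recursion {M : Type*} [Monoid M] [Inv M] [IsInverseSemigroup M]
    [Finite M] {n : ℕ} (hap : ∀ x : M, x ^ (n + 1) = x ^ n) {l r c : ℕ → M}
    (hl : ∀ k, l (k + 1) = l k * c (k + 1) * r k)
    (hr : ∀ k, r (k + 1) = r k * c (k + 1) * l k) :
    l (8 * Nat.card M) = r (8 * Nat.card M) := by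
  have hanti : Antitone fun k => idealWeight (l k) (r k) :=
    antitone_nat_of_succ_le fun k => hl k ▸ hr k ▸ idealWeight_mul_mul_le _ _ _
  obtain ⟨k, hk, hflat⟩ := hanti.exists_le_two_mul_eq
  have h₁ : IsRLProduct (l k) (c (k + 1)) (r k) ∧ IsRLProduct (r k) (c (k + 1)) (l k) := by
    apply isRLProduct_of_idealWeight_le
    rw [← hl, ← hr, ← hflat]
    exact hanti (by omega : k + 1 ≤ k + 2)
  have h₂ : IsRLProduct (l (k + 1)) (c (k + 2)) (r (k + 1)) ∧
      IsRLProduct (r (k + 1)) (c (k + 2)) (l (k + 1)) := by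
    apply isRLProduct_of_idealWeight_le
    rw [← hl, ← hr, hflat]
    exact hanti (by omega : k ≤ k + 1)
  rw [hl k, hr k] at h₂
  have hk' : l k = r k := IsInverseSemigroup.eq_of_isRLProduct hap h₁.1 h₁.2 h₂.1 h₂.2
  have hfrom : ∀ m, k ≤ m → l m = r m := fun m hm => by
    induction m, hm using Nat.le_induction with
    | base => exact hk'
    | succ m _ ih => rw [hl, hr, ih]
  have := idealWeight_le_four_mul_card (l 0) (r 0)
  exact hfrom _ (by omega)

/-- Every finite aperiodic inverse semigroup is Mal'cev nilpotent. -/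
theorem isMN_of_aperiodic_inverse (S : Type*) [Semigroup S] [Finite S]
    (hap : ∃ n : ℕ, 0 < n ∧
      ∀ x : S, (x : WithOne S) ^ (n + 1) = (x : WithOne S) ^ n)
    (hinv : ∀ s : S, ∃! x : S, s * x * s = s ∧ x * s * x = x) :
    IsMN S := by
  obtain ⟨n, -, hn⟩ := hap
  let : Inv S := ⟨fun s => (hinv s).choose⟩
  have : IsInverseSemigroup S :=
    ⟨fun s x => ⟨fun h => (hinv s).unique h (hinv s).choose_spec.1,
      fun h => h ▸ (hinv s).choose_spec.1⟩⟩
  have hap' : ∀ x : WithOne S, x ^ (n + 1) = x ^ n := by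
    intro x
    induction x using WithOne.cases_on
    · simp
    · exact hn
  refine ⟨8 * Nat.card (WithOne S), Nat.mul_pos (by norm_num) Nat.card_pos, fun a b c => ?_⟩
  exact eq_of_malcev_recursion (l := fun k => (lrho a b c k).1) (r := fun k => (lrho a b c k).2)
    hap' (fun _ => rfl) (fun _ => rfl)
end

section
/- There exists a finite aperiodic Mal'cev nilpotent semigroup S containing two idempotents e and f with ef ≠ fe. In particular, the class of finite aperiodic Mal'cev nilpotent semigroups is not contained in the class of finite semigroups with commuting idempotents. -/
/-- S is aperiodic, Mal'cev nilpotent, and has two non-commuting idempotents. -/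
def ApMNWitness (S : Type) [Semigroup S] : Prop :=
  (∃ n : ℕ, 0 < n ∧
    ∀ x : S, (x : WithOne S) ^ (n + 1) = (x : WithOne S) ^ n) ∧
  IsMN S ∧
  ∃ e f : S, e * e = e ∧ f * f = f ∧ e * f ≠ f * e

/-! The four-element semigroup `{0, u, e, f}` of 0/1 matrices `e = [[1,1],[0,0]]`,
`f = [[0,0],[0,1]]`, `u = ef = [[0,1],[0,0]]`, `0 = fe` has the idempotents `e`, `f` with
`ef ≠ fe`. Its nonzero products all have the shape `eⁱ fʲ` or `eⁱ u fʲ`, so a product in which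
some letter occurs on both sides of a different letter vanishes; `λ₂ = a c₁ b c₂ b c₁ a` and
`ρ₂ = b c₁ a c₂ a c₁ b` are such products unless `a = b`, hence `λ₂ = ρ₂`. -/

instance {α : Type*} [DecidableEq α] : DecidableEq (WithOne α) :=
  inferInstanceAs (DecidableEq (Option α))

instance {α : Type*} [Fintype α] : Fintype (WithOne α) :=
  inferInstanceAs (Fintype (Option α))

theorem lrho_two {S : Type*} [Semigroup S] (x y : WithOne S) (c : ℕ → WithOne S) :
    lrho x y c 2 = (x * c 1 * y * c 2 * (y * c 1 * x), y * c 1 * x * c 2 * (x * c 1 * y)) :=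
  rfl

theorem isMN_of_forall_lrho_two {S : Type*} [Semigroup S]
    (h : ∀ (a b : S) (c₁ c₂ : WithOne S),
      (a : WithOne S) * c₁ * b * c₂ * (b * c₁ * a) = b * c₁ * a * c₂ * (a * c₁ * b)) :
    IsMN S :=
  ⟨2, two_pos, fun a b c => by simpa only [lrho_two] using h a b (c 1) (c 2)⟩

inductive NoncommIdempotents : Type
  | zero | u | e | f
  deriving DecidableEq

namespace NoncommIdempotents

instance : Fintype NoncommIdempotents :=
  ⟨{zero, u, e, f}, fun x => by cases x <;> decide⟩

instance : Mul NoncommIdempotents where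
  mul
    | zero, _ => zero
    | _, zero => zero
    | e, e => e
    | f, f => f
    | e, f => u
    | e, u => u
    | u, f => u
    | _, _ => zero

instance : Semigroup NoncommIdempotents where
  mul_assoc := by decide

theorem isMN : IsMN NoncommIdempotents :=
  isMN_of_forall_lrho_two (by decide)

theorem pow_three_eq_pow_two (x : NoncommIdempotents) :
    (x : WithOne NoncommIdempotents) ^ 3 = (x : WithOne NoncommIdempotents) ^ 2 := by
  revert x
  decide

end NoncommIdempotents

/-- There is a finite aperiodic Mal'cev nilpotent semigroup with two
non-commuting idempotents. -/
theorem exists_aperiodic_MN_noncommuting_idempotents :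
    ∃ (S : Type) (inst : Semigroup S) (_ : Finite S), @ApMNWitness S inst :=
  ⟨NoncommIdempotents, inferInstance, inferInstance,
    ⟨2, two_pos, NoncommIdempotents.pow_three_eq_pow_two⟩, NoncommIdempotents.isMN,
    .e, .f, rfl, rfl, by decide⟩
end
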